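/- arXiv:2206.01792 — 5 statements merged into one kernel-verified Lean document; each statement's English description precedes it below -/
import Mathlib

section
/- (A priori error estimate for gradient-preserving hyper-reduction, fixed parameter.) Let t0 < T, N, k, d, m be positive integers, L ∈ ℝ^{2N×2N}, f ∈ ℝ^{2N}, c ∈ ℝ^d. Let G : ℝ^{2N} → ℝ^d be continuously differentiable with Jacobian J_G, set h(x) := cᵀG(x), so ∇h(x) = J_G(x)ᵀ c. Let A ∈ ℝ^{2N×2k} satisfy AᵀA = I_{2k} and Aᵀ J_{2N} A = J_{2k}. Let U ∈ ℝ^{d×m} have orthonormal columns, P ∈ ℝ^{d×m} a column selection matrix with PᵀU invertible, and ℙ := U(PᵀU)^{-1}Pᵀ. Let y : [t0,T] → ℝ^{2N} be differentiable with y'(t) = J_{2N}(L y(t) + f + ∇h(y(t))) for all t, and let ẑ : [t0,T] → ℝ^{2k} be differentiable with ẑ'(t) = J_{2k}(AᵀLA ẑ(t) + Aᵀf + Aᵀ J_G(A ẑ(t))ᵀ ℙᵀ c) for all t and ẑ(t0) = Aᵀ y(t0). Assume: (i) ∇h is Lipschitz with constant L_h; (ii) ‖J_G(x) − J_G(x')‖₂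 ≤ L_G ‖x − x'‖ for all x, x'; (iii) μ ∈ ℝ satisfies xᵀ (J_{2N} L) x ≤ μ ‖x‖² for all x ∈ ℝ^{2N}. Define K := J_{2N} L, α := ‖Aᵀ K‖₂ + L_h, β := μ + L_G ‖(PᵀU)^{-1}‖₂ ‖c‖, and C(T) := (e^{2β(T−t0)} − 1)/β if β ≠ 0, C(T) := 2(T − t0) if β = 0. Then ∫_{t0}^{T} ‖y(t) − A ẑ(t)‖² dt ≤ ((T − t0) C(T) α² + 1) ∫_{t0}^{T} ‖y(t) − A Aᵀ y(t)‖² dt + (T − t0) ‖c‖² C(T) ∫_{t0}^{T} ‖(I − ℙ) J_G(A Aᵀ y(t)) A‖₂² dt. -/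
open Matrix
open scoped RealInnerProductSpace

/-- The Euclidean (2-) norm of a real vector. -/
noncomputable def enorm {ι : Type*} [Fintype ι] (v : ι → ℝ) : ℝ :=
  Real.sqrt (∑ i, (v i) ^ 2)

/-- The squared Frobenius norm of a real matrix. -/
noncomputable def frobSq {ι κ : Type*} [Fintype ι] [Fintype κ] (M : Matrix ι κ ℝ) : ℝ :=
  ∑ i, ∑ j, (M i j) ^ 2

/-- The Frobenius norm of a real matrix. -/
noncomputable def frobNorm {ι κ : Type*} [Fintype ι] [Fintype κ] (M : Matrix ι κ ℝ) : ℝ :=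
  Real.sqrt (frobSq M)

/-- The spectral (operator 2-) norm of a real matrix. -/
noncomputable def specNorm {ι κ : Type*} [Fintype ι] [Fintype κ] [DecidableEq κ]
    (M : Matrix ι κ ℝ) : ℝ :=
  ‖LinearMap.toContinuousLinearMap (Matrix.toEuclideanLin M)‖

/-- Matrix-vector multiplication as a map between Euclidean spaces. -/
noncomputable def mulVecE {ι κ : Type*} [Fintype ι] [Fintype κ] [DecidableEq κ]
    (M : Matrix ι κ ℝ) (v : EuclideanSpace ℝ κ) : EuclideanSpace ℝ ι :=
  Matrix.toEuclideanLin M v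

/-- A matrix as a continuous linear map between Euclidean spaces. -/
noncomputable def toCLM {ι κ : Type*} [Fintype ι] [Fintype κ] [DecidableEq κ]
    (M : Matrix ι κ ℝ) : EuclideanSpace ℝ κ →L[ℝ] EuclideanSpace ℝ ι :=
  LinearMap.toContinuousLinearMap (Matrix.toEuclideanLin M)

/-- The canonical Poisson (symplectic) matrix `J = [[0, I], [-I, 0]]` of size `2n × 2n`. -/
noncomputable def Jmat (n : ℕ) : Matrix (Fin n ⊕ Fin n) (Fin n ⊕ Fin n) ℝ :=
  Matrix.fromBlocks 0 1 (-1) 0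

/-- A column selection matrix: its columns are distinct standard basis vectors. -/
def IsSelection {a b : ℕ} (P : Matrix (Fin a) (Fin b) ℝ) : Prop :=
  ∃ β : Fin b → Fin a, Function.Injective β ∧ ∀ i j, P i j = if i = β j then 1 else 0

/-!
Put `w = Aᵀ y - ẑ`. As `Aᵀ (y - A Aᵀ y) = 0` and `A` is an isometry,
`‖y - A ẑ‖² = ‖y - A Aᵀ y‖² + ‖w‖²`, so only `∫ ‖w‖²` has to be bounded.
An orthosymplectic `A` satisfies `Aᵀ J₂ₙ = J₂ₖ Aᵀ`, hence the hyper-reduced field at `ẑ` is `Aᵀ`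
applied to the full field at `A ẑ` with `J_G` replaced by `ℙ J_G`. Splitting the gradient error at
`A Aᵀ y` gives the one-sided estimate `⟪w, w'⟫ ≤ β ‖w‖² + g ‖w‖` with
`g = α ‖y - A Aᵀ y‖ + ‖c‖ ‖(I - ℙ) J_G(A Aᵀ y) A‖`. A Gronwall argument for `e^{-βt} w` yields
`‖w t‖ ≤ ∫ e^{β(t-s)} g(s) ds`, and Cauchy–Schwarz turns this into `‖w t‖² ≤ (C/2) ∫ g²`,
where `∫ g² ≤ 2α² ∫ ‖y - A Aᵀ y‖² + 2‖c‖² ∫ ‖(I - ℙ) J_G(A Aᵀ y) A‖²`.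
-/

open Set MeasureTheory Real
open scoped Matrix.Norms.L2Operator

section EuclideanMatrix

variable {ι κ ρ : Type*} [Fintype ι] [Fintype κ] [Fintype ρ] [DecidableEq κ] [DecidableEq ρ]

theorem specNorm_eq_norm (M : Matrix ι κ ℝ) : specNorm M = ‖M‖ := rfl

theorem mulVecE_mul (M : Matrix ι κ ℝ) (N : Matrix κ ρ ℝ) (v : EuclideanSpace ℝ ρ) :
    mulVecE (M * N) v = mulVecE M (mulVecE N v) := by
  simp [mulVecE]

theorem mulVecE_one (v : EuclideanSpace ℝ κ) : mulVecE (1 : Matrix κ κ ℝ) v = v := by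
  simp [mulVecE]

theorem mulVecE_add (M : Matrix ι κ ℝ) (u v : EuclideanSpace ℝ κ) :
    mulVecE M (u + v) = mulVecE M u + mulVecE M v := map_add _ u v

theorem mulVecE_sub (M : Matrix ι κ ℝ) (u v : EuclideanSpace ℝ κ) :
    mulVecE M (u - v) = mulVecE M u - mulVecE M v := map_sub _ u v

theorem sub_mulVecE (M M' : Matrix ι κ ℝ) (v : EuclideanSpace ℝ κ) :
    mulVecE (M - M') v = mulVecE M v - mulVecE M' v := by
  simp [mulVecE]

theorem continuous_mulVecE (M : Matrix ι κ ℝ) : Continuous (mulVecE M) := (toCLM M).continuous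

theorem inner_mulVecE_left [DecidableEq ι] (M : Matrix ι κ ℝ) (u : EuclideanSpace ℝ κ)
    (v : EuclideanSpace ℝ ι) : ⟪mulVecE M u, v⟫ = ⟪u, mulVecE Mᵀ v⟫ := by
  rw [mulVecE, mulVecE, ← Matrix.conjTranspose_eq_transpose_of_trivial,
    Matrix.toEuclideanLin_conjTranspose_eq_adjoint, LinearMap.adjoint_inner_right]

theorem norm_mulVecE_le (M : Matrix ι κ ℝ) (v : EuclideanSpace ℝ κ) :
    ‖mulVecE M v‖ ≤ ‖M‖ * ‖v‖ := (toCLM M).le_opNorm v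

theorem norm_mulVecE_of_transpose_mul_self [DecidableEq ι] {M : Matrix ι κ ℝ}
    (hM : Mᵀ * M = 1) (v : EuclideanSpace ℝ κ) : ‖mulVecE M v‖ = ‖v‖ := by
  rw [norm_eq_sqrt_real_inner, inner_mulVecE_left, ← mulVecE_mul, hM, mulVecE_one,
    ← norm_eq_sqrt_real_inner]

theorem norm_le_one_of_transpose_mul_self [DecidableEq ι] {M : Matrix ι κ ℝ}
    (hM : Mᵀ * M = 1) : ‖M‖ ≤ 1 :=
  (toCLM M).opNorm_le_bound zero_le_one fun v => by
    rw [toCLM, LinearMap.coe_toContinuousLinearMap', ← mulVecE,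
      norm_mulVecE_of_transpose_mul_self hM, one_mul]

theorem norm_mul_mul_transpose_le [DecidableEq ι] {U P : Matrix ι κ ℝ} (hU : Uᵀ * U = 1)
    (hP : Pᵀ * P = 1) (M : Matrix κ κ ℝ) : ‖U * M * Pᵀ‖ ≤ ‖M‖ := by
  have hPt : ‖Pᵀ‖ ≤ 1 := by
    rw [← Matrix.conjTranspose_eq_transpose_of_trivial, l2_opNorm_conjTranspose]
    exact norm_le_one_of_transpose_mul_self hP
  calc ‖U * M * Pᵀ‖ ≤ ‖U‖ * ‖M‖ * ‖Pᵀ‖ :=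
        (l2_opNorm_mul _ _).trans (mul_le_mul_of_nonneg_right (l2_opNorm_mul _ _) (norm_nonneg _))
    _ ≤ 1 * ‖M‖ * 1 := by
        gcongr
        exact norm_le_one_of_transpose_mul_self hU
    _ = ‖M‖ := by ring

theorem HasDerivAt.mulVecE (M : Matrix ι κ ℝ) {v : ℝ → EuclideanSpace ℝ κ}
    {v' : EuclideanSpace ℝ κ} {t : ℝ} (h : HasDerivAt v v' t) :
    HasDerivAt (fun s => mulVecE M (v s)) (mulVecE M v') t :=
  (toCLM M).hasFDerivAt.comp_hasDerivAt t h

theorem norm_sub_mulVecE_sq [DecidableEq ι] {A : Matrix ι κ ℝ} (hA : Aᵀ * A = 1)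
    (x : EuclideanSpace ℝ ι) (z : EuclideanSpace ℝ κ) :
    ‖x - mulVecE A z‖ ^ 2
      = ‖x - mulVecE (A * Aᵀ) x‖ ^ 2 + ‖mulVecE Aᵀ x - z‖ ^ 2 := by
  have hdecomp : x - mulVecE A z = (x - mulVecE (A * Aᵀ) x) + mulVecE A (mulVecE Aᵀ x - z) := by
    rw [mulVecE_sub, mulVecE_mul]
    abel
  have horth : ⟪x - mulVecE (A * Aᵀ) x, mulVecE A (mulVecE Aᵀ x - z)⟫ = 0 := by
    rw [real_inner_comm, inner_mulVecE_left, mulVecE_sub, ← mulVecE_mul Aᵀ (A * Aᵀ),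
      ← Matrix.mul_assoc, hA, Matrix.one_mul, sub_self, inner_zero_right]
  rw [hdecomp, norm_add_sq_real, horth, norm_mulVecE_of_transpose_mul_self hA]
  ring

end EuclideanMatrix

theorem IsSelection.transpose_mul_self {a b : ℕ} {P : Matrix (Fin a) (Fin b) ℝ}
    (hP : IsSelection P) : Pᵀ * P = 1 := by
  obtain ⟨β, hβ, hPβ⟩ := hP
  have hP1 : P = (1 : Matrix (Fin a) (Fin a) ℝ).submatrix id β := by
    ext i j
    simp [hPβ, Matrix.one_apply]
  rw [hP1, Matrix.transpose_submatrix, Matrix.transpose_one, ← Matrix.submatrix_mul _ _ _ _ _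
    Function.bijective_id, Matrix.one_mul, Matrix.submatrix_one _ hβ]

section Symplectic

theorem Jmat_mul_self (n : ℕ) : Jmat n * Jmat n = -1 := by
  rw [Jmat, Matrix.fromBlocks_multiply, ← Matrix.fromBlocks_one, Matrix.fromBlocks_neg]
  simp

theorem Jmat_transpose (n : ℕ) : (Jmat n)ᵀ = -Jmat n := by
  rw [Jmat, Matrix.fromBlocks_transpose, Matrix.fromBlocks_neg]
  simp

theorem Jmat_transpose_mul_self (n : ℕ) : (Jmat n)ᵀ * Jmat n = 1 := by
  rw [Jmat_transpose, Matrix.neg_mul, Jmat_mul_self, neg_neg]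

theorem Jmat_mul_transpose_self (n : ℕ) : Jmat n * (Jmat n)ᵀ = 1 := by
  rw [Jmat_transpose, Matrix.mul_neg, Jmat_mul_self, neg_neg]

variable {ι m n : Type*} [Fintype ι] [Fintype m] [Fintype n] [DecidableEq ι] [DecidableEq m]
  [DecidableEq n] {A : Matrix m n ℝ} {J : Matrix m m ℝ} {J' : Matrix n n ℝ}

theorem transpose_mul_eq_of_transpose_mul_mul_eq (hA : Aᵀ * A = 1) (hJ : J * Jᵀ = 1)
    (hJ' : J' * J'ᵀ = 1) (hAJA : Aᵀ * J * A = J') : Aᵀ * J = J' * Aᵀ := by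
  set B := Aᵀ * J - J' * Aᵀ
  have hB : B * Bᵀ = 0 := calc
    B * Bᵀ = Aᵀ * (J * Jᵀ) * A - (Aᵀ * J * A) * J'ᵀ - J' * (Aᵀ * J * A)ᵀ
        + J' * (Aᵀ * A) * J'ᵀ := by
      simp only [B, Matrix.transpose_sub, Matrix.transpose_mul, Matrix.transpose_transpose,
        Matrix.sub_mul, Matrix.mul_sub, Matrix.mul_assoc]
      abel
    _ = 0 := by
      rw [hJ, Matrix.mul_one, hA, hAJA, hJ', Matrix.mul_one, hJ']
      abel
  rwa [← Matrix.conjTranspose_eq_transpose_of_trivial, Matrix.self_mul_conjTranspose_eq_zero,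
    sub_eq_zero] at hB

theorem inner_mulVecE_mul_transpose_le (hAJ : Aᵀ * J = J' * Aᵀ) (hJ' : J' * J'ᵀ = 1)
    (M : Matrix ι m ℝ) (w : EuclideanSpace ℝ n) (c : EuclideanSpace ℝ ι) :
    ⟪mulVecE A w, mulVecE J (mulVecE Mᵀ c)⟫ ≤ ‖c‖ * ‖M * A‖ * ‖w‖ := by
  have hJA : Jᵀ * A = A * J'ᵀ := by
    simpa only [Matrix.transpose_mul, Matrix.transpose_transpose]
      using congrArg Matrix.transpose hAJ
  calc ⟪mulVecE A w, mulVecE J (mulVecE Mᵀ c)⟫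
      = ⟪c, mulVecE (M * A) (mulVecE J'ᵀ w)⟫ := by
        rw [real_inner_comm, inner_mulVecE_left, inner_mulVecE_left, Matrix.transpose_transpose,
          ← mulVecE_mul Jᵀ, hJA, mulVecE_mul, ← mulVecE_mul M]
    _ ≤ ‖c‖ * (‖M * A‖ * ‖mulVecE J'ᵀ w‖) :=
        (real_inner_le_norm _ _).trans
          (mul_le_mul_of_nonneg_left (norm_mulVecE_le _ _) (norm_nonneg _))
    _ = ‖c‖ * ‖M * A‖ * ‖w‖ := by
        rw [norm_mulVecE_of_transpose_mul_self (by rwa [Matrix.transpose_transpose]), mul_assoc]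

end Symplectic

section IntervalIntegral

variable {a b : ℝ}

theorem hasDerivWithinAt_integral_Ici {h : ℝ → ℝ} (hh : ContinuousOn h (Icc a b)) {x : ℝ}
    (hx : x ∈ Ico a b) : HasDerivWithinAt (fun u => ∫ s in a..u, h s) (h x) (Ici x) x := by
  have hIcc : Icc a b ∈ nhdsWithin x (Ioi x) := Icc_mem_nhdsGT_of_mem hx
  refine intervalIntegral.integral_hasDerivWithinAt_right ?_
    ((hh.stronglyMeasurableAtFilter_nhdsWithin measurableSet_Icc x).filter_mono
      (nhdsWithin_le_of_mem hIcc))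
    ((hh x (Ico_subset_Icc_self hx)).mono_of_mem_nhdsWithin hIcc)
  exact (hh.mono (Icc_subset_Icc_right hx.2.le)).intervalIntegrable_of_Icc hx.1

theorem integral_exp_mul_sub_le (c : ℝ) {t : ℝ} (ht : t ∈ Icc a b) :
    ∫ s in a..t, exp (c * (t - s)) ≤ ∫ s in 0..b - a, exp (c * s) := by
  rw [intervalIntegral.integral_comp_sub_left (fun s => exp (c * s)), sub_self]
  exact intervalIntegral.integral_mono_interval le_rfl (by linarith [ht.1]) (by linarith [ht.2])
    (ae_of_all _ fun s => (exp_pos _).le)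
    ((by fun_prop : Continuous fun s => exp (c * s)).intervalIntegrable _ _)

theorem integral_exp_mul {c : ℝ} (hc : c ≠ 0) (x : ℝ) :
    ∫ s in 0..x, exp (c * s) = (exp (c * x) - 1) / c := by
  rw [intervalIntegral.integral_comp_mul_left _ hc, integral_exp, mul_zero, exp_zero,
    smul_eq_mul, inv_mul_eq_div]

theorem sq_integral_mul_le (hab : a ≤ b) {F G : ℝ → ℝ} (hF : ContinuousOn F (Icc a b))
    (hG : ContinuousOn G (Icc a b)) :
    (∫ s in a..b, F s * G s) ^ 2 ≤ (∫ s in a..b, F s ^ 2) * ∫ s in a..b, G s ^ 2 := by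
  have hquad : ∀ x : ℝ, 0 ≤ (∫ s in a..b, F s ^ 2) * (x * x)
      + (-2 * ∫ s in a..b, F s * G s) * x + ∫ s in a..b, G s ^ 2 := by
    intro x
    have hexpand : ∫ s in a..b, (x * F s - G s) ^ 2 = (∫ s in a..b, F s ^ 2) * (x * x)
        + (-2 * ∫ s in a..b, F s * G s) * x + ∫ s in a..b, G s ^ 2 := by
      have hF2 : IntervalIntegrable (fun s => F s ^ 2) volume a b :=
        (hF.pow 2).intervalIntegrable_of_Icc hab
      have hFG : IntervalIntegrable (fun s => F s * G s) volume a b :=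
        (hF.mul hG).intervalIntegrable_of_Icc hab
      have hG2 : IntervalIntegrable (fun s => G s ^ 2) volume a b :=
        (hG.pow 2).intervalIntegrable_of_Icc hab
      simp only [show ∀ s, (x * F s - G s) ^ 2 = x * x * F s ^ 2 + -2 * x * (F s * G s) + G s ^ 2
        from fun s => by ring]
      rw [intervalIntegral.integral_add ((hF2.const_mul _).add (hFG.const_mul _)) hG2,
        intervalIntegral.integral_add (hF2.const_mul _) (hFG.const_mul _),
        intervalIntegral.integral_const_mul, intervalIntegral.integral_const_mul]
      ring
    exact hexpand ▸ intervalIntegral.integral_nonneg hab fun s _ => sq_nonneg _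
  have := discrim_le_zero hquad
  rw [discrim] at this
  nlinarith

theorem integral_add_sq_le (hab : a ≤ b) {u v : ℝ → ℝ} (hu : ContinuousOn u (Icc a b))
    (hv : ContinuousOn v (Icc a b)) :
    ∫ s in a..b, (u s + v s) ^ 2
      ≤ 2 * (∫ s in a..b, u s ^ 2) + 2 * ∫ s in a..b, v s ^ 2 := by
  have hu2 : IntervalIntegrable (fun s => 2 * u s ^ 2) volume a b :=
    (continuousOn_const.mul (hu.pow 2)).intervalIntegrable_of_Icc hab
  have hv2 : IntervalIntegrable (fun s => 2 * v s ^ 2) volume a b :=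
    (continuousOn_const.mul (hv.pow 2)).intervalIntegrable_of_Icc hab
  rw [← intervalIntegral.integral_const_mul, ← intervalIntegral.integral_const_mul,
    ← intervalIntegral.integral_add hu2 hv2]
  exact intervalIntegral.integral_mono_on hab
    (((hu.add hv).pow 2).intervalIntegrable_of_Icc hab) (hu2.add hv2)
    fun s _ => by nlinarith [sq_nonneg (u s - v s)]

end IntervalIntegral

section Gronwall

variable {H : Type*} [NormedAddCommGroup H] [InnerProductSpace ℝ H] {a b : ℝ}

theorem norm_le_add_integral_of_inner_deriv_le {v v' : ℝ → H} {h : ℝ → ℝ}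
    (hv : ∀ t ∈ Icc a b, HasDerivAt v (v' t) t) (hh : ContinuousOn h (Icc a b))
    (hh0 : ∀ t ∈ Icc a b, 0 ≤ h t)
    (hvh : ∀ t ∈ Icc a b, ⟪v t, v' t⟫ ≤ h t * ‖v t‖) :
    ∀ t ∈ Icc a b, ‖v t‖ ≤ ‖v a‖ + ∫ s in a..t, h s := by
  intro t ht
  have hab : a ≤ b := ht.1.trans ht.2
  refine le_of_forall_pos_le_add fun ε hε => ?_
  -- `‖v‖` need not be differentiable where `v` vanishes, so compare its smoothing instead
  set m : ℝ → ℝ := fun u => √(‖v u‖ ^ 2 + ε ^ 2)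
  have hm_pos : ∀ u, 0 < m u := fun u => Real.sqrt_pos.2 (by positivity)
  have hm_deriv : ∀ u ∈ Icc a b, HasDerivAt m (⟪v u, v' u⟫ / m u) u := by
    intro u hu
    convert ((hv u hu).norm_sq.add_const (ε ^ 2)).sqrt (by positivity) using 1
    simp only [m]
    field_simp
  have hm_deriv_le : ∀ u ∈ Icc a b, ⟪v u, v' u⟫ / m u ≤ h u := by
    intro u hu
    have hvm : ‖v u‖ ≤ m u := (Real.le_sqrt (norm_nonneg _) (by positivity)).2 (by nlinarith)
    rw [div_le_iff₀ (hm_pos u)]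
    exact (hvh u hu).trans (mul_le_mul_of_nonneg_left hvm (hh0 u hu))
  have hcmp := image_le_of_deriv_right_le_deriv_boundary (f := m)
    (HasDerivAt.continuousOn hm_deriv)
    (fun x hx => (hm_deriv x (Ico_subset_Icc_self hx)).hasDerivWithinAt)
    (B := fun u => m a + ∫ s in a..u, h s) (by simp)
    (continuousOn_const.add (uIcc_of_le hab ▸ intervalIntegral.continuousOn_primitive_interval
      (uIcc_of_le hab ▸ hh.integrableOn_Icc)))
    (fun x hx => (hasDerivWithinAt_integral_Ici hh hx).const_add (m a))
    (fun x hx => hm_deriv_le x (Ico_subset_Icc_self hx)) ht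
  have hvt : ‖v t‖ ≤ m t := (Real.le_sqrt (norm_nonneg _) (by positivity)).2 (by nlinarith)
  have hma : m a ≤ ‖v a‖ + ε :=
    Real.sqrt_le_iff.2 ⟨by positivity, by nlinarith [norm_nonneg (v a)]⟩
  linarith

theorem norm_le_integral_exp_mul_of_inner_deriv_le {w w' : ℝ → H} {g : ℝ → ℝ} {β : ℝ}
    (hw : ∀ t ∈ Icc a b, HasDerivAt w (w' t) t) (hg : ContinuousOn g (Icc a b))
    (hg0 : ∀ t ∈ Icc a b, 0 ≤ g t)
    (hwg : ∀ t ∈ Icc a b, ⟪w t, w' t⟫ ≤ β * ‖w t‖ ^ 2 + g t * ‖w t‖) :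
    ∀ t ∈ Icc a b,
      ‖w t‖ ≤ exp (β * (t - a)) * ‖w a‖ + ∫ s in a..t, exp (β * (t - s)) * g s := by
  -- the weight `exp (-β t)` absorbs the term `β ‖w‖²`
  have hv : ∀ t ∈ Icc a b, HasDerivAt (fun u => exp (-β * u) • w u)
      (exp (-β * t) • w' t + (exp (-β * t) * -β) • w t) t := fun t ht =>
    (((hasDerivAt_id t).const_mul (-β)).exp.smul (hw t ht)).congr_deriv (by simp)
  have hbound := norm_le_add_integral_of_inner_deriv_le hv
    (h := fun s => exp (-β * s) * g s)
    ((continuous_exp.comp (continuous_const_mul _)).continuousOn.mul hg)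
    (fun t ht => mul_nonneg (exp_pos _).le (hg0 t ht)) (fun t ht => by
      simp only [inner_add_right, inner_smul_left, inner_smul_right, real_inner_self_eq_norm_sq,
        norm_smul, norm_of_nonneg (exp_pos _).le, conj_trivial]
      have := mul_le_mul_of_nonneg_left (hwg t ht)
        (mul_pos (exp_pos (-β * t)) (exp_pos (-β * t))).le
      nlinarith)
  intro t ht
  have key := hbound t ht
  simp only [norm_smul, norm_of_nonneg (exp_pos _).le] at key
  have hexp : ∀ s, exp (β * (t - s)) = exp (β * t) * exp (-β * s) := fun s => by
    rw [← exp_add]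
    ring_nf
  calc ‖w t‖ = exp (β * t) * (exp (-β * t) * ‖w t‖) := by
        rw [← mul_assoc, ← exp_add]
        simp
    _ ≤ exp (β * t) * (exp (-β * a) * ‖w a‖ + ∫ s in a..t, exp (-β * s) * g s) :=
        mul_le_mul_of_nonneg_left key (exp_pos _).le
    _ = _ := by
        simp only [hexp, mul_add, ← intervalIntegral.integral_const_mul, mul_assoc]

theorem integral_norm_sq_le_of_inner_deriv_le {w w' : ℝ → H} {g : ℝ → ℝ} {β : ℝ}
    (hab : a ≤ b) (hw : ∀ t ∈ Icc a b, HasDerivAt w (w' t) t) (hw0 : w a = 0)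
    (hg : ContinuousOn g (Icc a b))
    (hg0 : ∀ t ∈ Icc a b, 0 ≤ g t)
    (hwg : ∀ t ∈ Icc a b, ⟪w t, w' t⟫ ≤ β * ‖w t‖ ^ 2 + g t * ‖w t‖) :
    ∫ t in a..b, ‖w t‖ ^ 2
      ≤ (b - a) * (∫ s in 0..b - a, exp (2 * β * s)) * ∫ t in a..b, g t ^ 2 := by
  have hpointwise : ∀ t ∈ Icc a b,
      ‖w t‖ ^ 2 ≤ (∫ s in 0..b - a, exp (2 * β * s)) * ∫ s in a..b, g s ^ 2 := by
    intro t ht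
    have hsub : Icc a t ⊆ Icc a b := Icc_subset_Icc_right ht.2
    have hnorm := norm_le_integral_exp_mul_of_inner_deriv_le hw hg hg0 hwg t ht
    rw [hw0, norm_zero, mul_zero, zero_add] at hnorm
    calc ‖w t‖ ^ 2 ≤ (∫ s in a..t, exp (β * (t - s)) * g s) ^ 2 :=
          pow_le_pow_left₀ (norm_nonneg _) hnorm 2
      _ ≤ (∫ s in a..t, exp (β * (t - s)) ^ 2) * ∫ s in a..t, g s ^ 2 :=
          sq_integral_mul_le ht.1 (by fun_prop) (hg.mono hsub)
      _ ≤ (∫ s in 0..b - a, exp (2 * β * s)) * ∫ s in a..b, g s ^ 2 := by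
          have hexp :
              ∫ s in a..t, exp (β * (t - s)) ^ 2 = ∫ s in a..t, exp (2 * β * (t - s)) :=
            intervalIntegral.integral_congr fun s _ => by
              simp only [sq, ← exp_add]
              ring_nf
          rw [hexp]
          exact mul_le_mul (integral_exp_mul_sub_le (2 * β) ht)
            (intervalIntegral.integral_mono_interval le_rfl ht.1 ht.2
              (ae_of_all _ fun s => sq_nonneg _) ((hg.pow 2).intervalIntegrable_of_Icc hab))
            (intervalIntegral.integral_nonneg ht.1 fun s _ => sq_nonneg _)
            (intervalIntegral.integral_nonneg (by linarith [ht.1, ht.2]) fun s _ => (exp_pos _).le)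
  calc ∫ t in a..b, ‖w t‖ ^ 2
      ≤ ∫ _ in a..b, (∫ s in 0..b - a, exp (2 * β * s)) * ∫ s in a..b, g s ^ 2 :=
        intervalIntegral.integral_mono_on hab
          (((HasDerivAt.continuousOn hw).norm.pow 2).intervalIntegrable_of_Icc hab)
          intervalIntegrable_const hpointwise
    _ = _ := by rw [intervalIntegral.integral_const, smul_eq_mul, mul_assoc]

end Gronwall

section HyperReduction

variable {N k d : ℕ} (L : Matrix (Fin N ⊕ Fin N) (Fin N ⊕ Fin N) ℝ)
  (f : EuclideanSpace ℝ (Fin N ⊕ Fin N)) (c : EuclideanSpace ℝ (Fin d))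
  (JG : EuclideanSpace ℝ (Fin N ⊕ Fin N) → Matrix (Fin d) (Fin N ⊕ Fin N) ℝ)

noncomputable def hamiltonianField (x : EuclideanSpace ℝ (Fin N ⊕ Fin N)) :
    EuclideanSpace ℝ (Fin N ⊕ Fin N) :=
  mulVecE (Jmat N) (mulVecE L x + f + mulVecE (JG x)ᵀ c)

noncomputable def hyperReducedField (A : Matrix (Fin N ⊕ Fin N) (Fin k ⊕ Fin k) ℝ)
    (DP : Matrix (Fin d) (Fin d) ℝ) (z : EuclideanSpace ℝ (Fin k ⊕ Fin k)) :
    EuclideanSpace ℝ (Fin k ⊕ Fin k) :=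
  mulVecE (Jmat k) (mulVecE (Aᵀ * L * A) z + mulVecE Aᵀ f
    + mulVecE (Aᵀ * (JG (mulVecE A z))ᵀ * DPᵀ) c)

variable {L f c JG} {A : Matrix (Fin N ⊕ Fin N) (Fin k ⊕ Fin k) ℝ}
  {DP : Matrix (Fin d) (Fin d) ℝ}

theorem hamiltonianField_sub_hamiltonianField
    (JG' : EuclideanSpace ℝ (Fin N ⊕ Fin N) → Matrix (Fin d) (Fin N ⊕ Fin N) ℝ) (x x') :
    hamiltonianField L f c JG x - hamiltonianField L f c JG' x'
      = mulVecE (Jmat N) (mulVecE L (x - x') + (mulVecE (JG x)ᵀ c - mulVecE (JG' x')ᵀ c)) := by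
  rw [hamiltonianField, hamiltonianField, ← mulVecE_sub, mulVecE_sub L]
  congr 1
  abel

theorem hyperReducedField_eq (hAJ : Aᵀ * Jmat N = Jmat k * Aᵀ)
    (z : EuclideanSpace ℝ (Fin k ⊕ Fin k)) :
    hyperReducedField L f c JG A DP z
      = mulVecE Aᵀ (hamiltonianField L f c (fun x => DP * JG x) (mulVecE A z)) := by
  rw [hyperReducedField, hamiltonianField, ← mulVecE_mul Aᵀ, hAJ, mulVecE_mul (Jmat k)]
  refine congrArg (mulVecE (Jmat k)) ?_
  simp only [mulVecE_add, mulVecE_mul, Matrix.transpose_mul]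

theorem mulVecE_transpose_hamiltonianField_sub_hyperReducedField
    (hAJ : Aᵀ * Jmat N = Jmat k * Aᵀ) (x : EuclideanSpace ℝ (Fin N ⊕ Fin N))
    (z : EuclideanSpace ℝ (Fin k ⊕ Fin k)) :
    mulVecE Aᵀ (hamiltonianField L f c JG x) - hyperReducedField L f c JG A DP z
      = mulVecE Aᵀ (mulVecE (Jmat N) (mulVecE L (x - mulVecE (A * Aᵀ) x)
          + mulVecE L (mulVecE A (mulVecE Aᵀ x - z))
          + (mulVecE (JG x)ᵀ c - mulVecE (JG (mulVecE (A * Aᵀ) x))ᵀ c)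
          + mulVecE ((1 - DP) * JG (mulVecE (A * Aᵀ) x))ᵀ c
          + mulVecE (DP * (JG (mulVecE (A * Aᵀ) x) - JG (mulVecE A z)))ᵀ c)) := by
  rw [hyperReducedField_eq hAJ, ← mulVecE_sub, hamiltonianField_sub_hamiltonianField]
  congr 2
  simp only [Matrix.sub_mul, Matrix.mul_sub, Matrix.one_mul, Matrix.transpose_sub, sub_mulVecE,
    mulVecE_sub, mulVecE_mul]
  abel

theorem inner_sub_hyperReducedField_le (hA1 : Aᵀ * A = 1) (hA2 : Aᵀ * Jmat N * A = Jmat k)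
    {Lh LG mu κ : ℝ}
    (hLh : ∀ x x', ‖mulVecE (JG x)ᵀ c - mulVecE (JG x')ᵀ c‖ ≤ Lh * ‖x - x'‖)
    (hLG : ∀ x x', ‖JG x - JG x'‖ ≤ LG * ‖x - x'‖)
    (hmu : ∀ x, ⟪x, mulVecE (Jmat N * L) x⟫ ≤ mu * ‖x‖ ^ 2) (hDP : ‖DP‖ ≤ κ)
    (x : EuclideanSpace ℝ (Fin N ⊕ Fin N)) (z : EuclideanSpace ℝ (Fin k ⊕ Fin k)) :
    ⟪mulVecE Aᵀ x - z,
        mulVecE Aᵀ (hamiltonianField L f c JG x) - hyperReducedField L f c JG A DP z⟫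
      ≤ (mu + LG * κ * ‖c‖) * ‖mulVecE Aᵀ x - z‖ ^ 2
        + ((‖Aᵀ * (Jmat N * L)‖ + Lh) * ‖x - mulVecE (A * Aᵀ) x‖
            + ‖c‖ * ‖(1 - DP) * JG (mulVecE (A * Aᵀ) x) * A‖)
          * ‖mulVecE Aᵀ x - z‖ := by
  have hAJ := transpose_mul_eq_of_transpose_mul_mul_eq hA1 (Jmat_mul_transpose_self N)
    (Jmat_mul_transpose_self k) hA2
  rw [mulVecE_transpose_hamiltonianField_sub_hyperReducedField hAJ, ← inner_mulVecE_left]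
  simp only [mulVecE_add, inner_add_right]
  set xb := mulVecE (A * Aᵀ) x
  set w := mulVecE Aᵀ x - z
  have hAw : ‖mulVecE A w‖ = ‖w‖ := norm_mulVecE_of_transpose_mul_self hA1 w
  have hlin : ⟪mulVecE A w, mulVecE (Jmat N) (mulVecE L (x - xb))⟫
      ≤ ‖w‖ * (‖Aᵀ * (Jmat N * L)‖ * ‖x - xb‖) := by
    rw [inner_mulVecE_left, ← mulVecE_mul, ← mulVecE_mul, Matrix.mul_assoc]
    exact (real_inner_le_norm _ _).trans
      (mul_le_mul_of_nonneg_left (norm_mulVecE_le _ _) (norm_nonneg _))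
  have hmono : ⟪mulVecE A w, mulVecE (Jmat N) (mulVecE L (mulVecE A w))⟫ ≤ mu * ‖w‖ ^ 2 :=
    hAw ▸ mulVecE_mul (Jmat N) L (mulVecE A w) ▸ hmu _
  have hgrad : ⟪mulVecE A w, mulVecE (Jmat N) (mulVecE (JG x)ᵀ c - mulVecE (JG xb)ᵀ c)⟫
      ≤ ‖w‖ * (Lh * ‖x - xb‖) := by
    refine hAw ▸ (real_inner_le_norm _ _).trans (mul_le_mul_of_nonneg_left ?_ (norm_nonneg _))
    rw [norm_mulVecE_of_transpose_mul_self (Jmat_transpose_mul_self N)]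
    exact hLh x xb
  have hdeim := inner_mulVecE_mul_transpose_le hAJ (Jmat_mul_transpose_self k)
    ((1 - DP) * JG xb) w c
  have hlip : ‖DP * (JG xb - JG (mulVecE A z)) * A‖ ≤ κ * (LG * ‖w‖) := by
    have hJG : ‖JG xb - JG (mulVecE A z)‖ ≤ LG * ‖w‖ := by
      rw [← hAw, show mulVecE A w = xb - mulVecE A z by
        simp only [w, xb, mulVecE_sub, mulVecE_mul]]
      exact hLG _ _
    have hκ : 0 ≤ κ := (norm_nonneg _).trans hDP
    calc ‖DP * (JG xb - JG (mulVecE A z)) * A‖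
        ≤ ‖DP‖ * ‖JG xb - JG (mulVecE A z)‖ * ‖A‖ :=
          (l2_opNorm_mul _ _).trans (mul_le_mul_of_nonneg_right (l2_opNorm_mul _ _) (norm_nonneg _))
      _ ≤ κ * (LG * ‖w‖) * 1 :=
          mul_le_mul (mul_le_mul hDP hJG (norm_nonneg _) hκ)
            (norm_le_one_of_transpose_mul_self hA1) (norm_nonneg _)
            (mul_nonneg hκ ((norm_nonneg _).trans hJG))
      _ = κ * (LG * ‖w‖) := mul_one _
  have hproj := (inner_mulVecE_mul_transpose_le hAJ (Jmat_mul_transpose_self k)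
    (DP * (JG xb - JG (mulVecE A z))) w c).trans
      (mul_le_mul_of_nonneg_right (mul_le_mul_of_nonneg_left hlip (norm_nonneg c)) (norm_nonneg w))
  linear_combination hlin + hmono + hgrad + hdeim + hproj

theorem integral_norm_transpose_sub_sq_le {t0 T : ℝ} (hT : t0 ≤ T) (hA1 : Aᵀ * A = 1)
    (hA2 : Aᵀ * Jmat N * A = Jmat k) {Lh LG mu κ : ℝ}
    (hLh : ∀ x x', ‖mulVecE (JG x)ᵀ c - mulVecE (JG x')ᵀ c‖ ≤ Lh * ‖x - x'‖)
    (hLG : ∀ x x', ‖JG x - JG x'‖ ≤ LG * ‖x - x'‖)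
    (hmu : ∀ x, ⟪x, mulVecE (Jmat N * L) x⟫ ≤ mu * ‖x‖ ^ 2) (hDP : ‖DP‖ ≤ κ)
    {y : ℝ → EuclideanSpace ℝ (Fin N ⊕ Fin N)}
    {zh : ℝ → EuclideanSpace ℝ (Fin k ⊕ Fin k)}
    (hy : ∀ t ∈ Icc t0 T, HasDerivAt y (hamiltonianField L f c JG (y t)) t)
    (hz : ∀ t ∈ Icc t0 T, HasDerivAt zh (hyperReducedField L f c JG A DP (zh t)) t)
    (hz0 : zh t0 = mulVecE Aᵀ (y t0)) :
    ∫ t in t0..T, ‖mulVecE Aᵀ (y t) - zh t‖ ^ 2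
      ≤ (T - t0) * (∫ s in 0..T - t0, exp (2 * (mu + LG * κ * ‖c‖) * s))
        * (2 * (‖Aᵀ * (Jmat N * L)‖ + Lh) ^ 2
            * (∫ t in t0..T, ‖y t - mulVecE (A * Aᵀ) (y t)‖ ^ 2)
          + 2 * ‖c‖ ^ 2
            * ∫ t in t0..T, ‖(1 - DP) * JG (mulVecE (A * Aᵀ) (y t)) * A‖ ^ 2) := by
  set α := ‖Aᵀ * (Jmat N * L)‖ + Lh
  set p := fun t => y t - mulVecE (A * Aᵀ) (y t)
  set s := fun t => ‖(1 - DP) * JG (mulVecE (A * Aᵀ) (y t)) * A‖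
  have hy_cont : ContinuousOn y (Icc t0 T) := HasDerivAt.continuousOn hy
  have hp_cont : ContinuousOn p (Icc t0 T) :=
    hy_cont.sub ((continuous_mulVecE _).comp_continuousOn hy_cont)
  have hs_cont : ContinuousOn s (Icc t0 T) := by
    have hJG : Continuous JG := (LipschitzWith.of_dist_le' (K := LG) fun x x' => by
      simpa only [dist_eq_norm] using hLG x x').continuous
    have hM : Continuous fun x => (1 - DP) * JG x * A :=
      (continuous_const.matrix_mul hJG).matrix_mul continuous_const
    exact hM.norm.comp_continuousOn ((continuous_mulVecE _).comp_continuousOn hy_cont)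
  have hg0 : ∀ t ∈ Icc t0 T, 0 ≤ α * ‖p t‖ + ‖c‖ * s t := fun t _ => by
    have hLhp : 0 ≤ Lh * ‖p t‖ := (norm_nonneg _).trans (hLh _ _)
    have hLp : 0 ≤ ‖Aᵀ * (Jmat N * L)‖ * ‖p t‖ :=
      mul_nonneg (norm_nonneg _) (norm_nonneg _)
    have hcs : 0 ≤ ‖c‖ * s t := mul_nonneg (norm_nonneg _) (norm_nonneg _)
    rw [add_mul]
    linarith
  have hw := integral_norm_sq_le_of_inner_deriv_le (w := fun t => mulVecE Aᵀ (y t) - zh t)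
    (g := fun t => α * ‖p t‖ + ‖c‖ * s t) hT
    (fun t ht => ((hy t ht).mulVecE Aᵀ).sub (hz t ht))
    (sub_eq_zero.2 hz0.symm) ((continuousOn_const.mul hp_cont.norm).add
      (continuousOn_const.mul hs_cont)) hg0
    fun t _ => inner_sub_hyperReducedField_le hA1 hA2 hLh hLG hmu hDP (y t) (zh t)
  have hg : ∫ t in t0..T, (α * ‖p t‖ + ‖c‖ * s t) ^ 2
      ≤ 2 * α ^ 2 * (∫ t in t0..T, ‖p t‖ ^ 2)
        + 2 * ‖c‖ ^ 2 * ∫ t in t0..T, s t ^ 2 := by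
    have := integral_add_sq_le hT (u := fun t => α * ‖p t‖) (v := fun t => ‖c‖ * s t)
      (continuousOn_const.mul hp_cont.norm) (continuousOn_const.mul hs_cont)
    simpa only [mul_pow, intervalIntegral.integral_const_mul, mul_assoc] using this
  have hE : 0 ≤ (T - t0) * ∫ s in 0..T - t0, exp (2 * (mu + LG * κ * ‖c‖) * s) :=
    mul_nonneg (sub_nonneg.2 hT)
      (intervalIntegral.integral_nonneg (sub_nonneg.2 hT) fun _ _ => (exp_pos _).le)
  exact hw.trans (mul_le_mul_of_nonneg_left hg hE)

end HyperReduction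

theorem integral_norm_sub_mulVecE_sq {ι κ : Type*} [Fintype ι] [Fintype κ] [DecidableEq ι]
    [DecidableEq κ] {A : Matrix ι κ ℝ} (hA : Aᵀ * A = 1) {a b : ℝ} (hab : a ≤ b)
    {y : ℝ → EuclideanSpace ℝ ι} {z : ℝ → EuclideanSpace ℝ κ}
    (hy : ContinuousOn y (Icc a b)) (hz : ContinuousOn z (Icc a b)) :
    ∫ t in a..b, ‖y t - mulVecE A (z t)‖ ^ 2
      = (∫ t in a..b, ‖y t - mulVecE (A * Aᵀ) (y t)‖ ^ 2)
        + ∫ t in a..b, ‖mulVecE Aᵀ (y t) - z t‖ ^ 2 := by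
  have hAy := (continuous_mulVecE (A * Aᵀ)).comp_continuousOn hy
  have hATy := (continuous_mulVecE Aᵀ).comp_continuousOn hy
  have hp : IntervalIntegrable (fun t => ‖y t - mulVecE (A * Aᵀ) (y t)‖ ^ 2) volume a b :=
    ((hy.sub hAy).norm.pow 2).intervalIntegrable_of_Icc hab
  have hw : IntervalIntegrable (fun t => ‖mulVecE Aᵀ (y t) - z t‖ ^ 2) volume a b :=
    ((hATy.sub hz).norm.pow 2).intervalIntegrable_of_Icc hab
  rw [← intervalIntegral.integral_add hp hw]
  exact intervalIntegral.integral_congr fun t _ => norm_sub_mulVecE_sq hA (y t) (z t)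

theorem stmt_6_general (t0 T : ℝ) (ht : t0 < T) (N k d m : ℕ)
    (L : Matrix (Fin N ⊕ Fin N) (Fin N ⊕ Fin N) ℝ)
    (f : EuclideanSpace ℝ (Fin N ⊕ Fin N))
    (c : EuclideanSpace ℝ (Fin d))
    (JG : EuclideanSpace ℝ (Fin N ⊕ Fin N) → Matrix (Fin d) (Fin N ⊕ Fin N) ℝ)
    (A : Matrix (Fin N ⊕ Fin N) (Fin k ⊕ Fin k) ℝ)
    (hA1 : Aᵀ * A = 1) (hA2 : Aᵀ * Jmat N * A = Jmat k)
    (U : Matrix (Fin d) (Fin m) ℝ) (hU : Uᵀ * U = 1)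
    (P : Matrix (Fin d) (Fin m) ℝ) (hP : IsSelection P)
    (DP : Matrix (Fin d) (Fin d) ℝ) (hDP : DP = U * (Pᵀ * U)⁻¹ * Pᵀ)
    (y : ℝ → EuclideanSpace ℝ (Fin N ⊕ Fin N))
    (zh : ℝ → EuclideanSpace ℝ (Fin k ⊕ Fin k))
    (hy : ∀ t ∈ Set.Icc t0 T,
      HasDerivAt y (mulVecE (Jmat N) (mulVecE L (y t) + f + mulVecE (JG (y t))ᵀ c)) t)
    (hz : ∀ t ∈ Set.Icc t0 T,
      HasDerivAt zh (mulVecE (Jmat k)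
        (mulVecE (Aᵀ * L * A) (zh t) + mulVecE Aᵀ f
          + mulVecE (Aᵀ * (JG (mulVecE A (zh t)))ᵀ * DPᵀ) c)) t)
    (hz0 : zh t0 = mulVecE Aᵀ (y t0))
    (Lh LG mu : ℝ)
    (hLh : ∀ x x' : EuclideanSpace ℝ (Fin N ⊕ Fin N),
      ‖mulVecE (JG x)ᵀ c - mulVecE (JG x')ᵀ c‖ ≤ Lh * ‖x - x'‖)
    (hLG : ∀ x x' : EuclideanSpace ℝ (Fin N ⊕ Fin N),
      specNorm (JG x - JG x') ≤ LG * ‖x - x'‖)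
    (hmu : ∀ x : EuclideanSpace ℝ (Fin N ⊕ Fin N),
      (inner ℝ x (mulVecE (Jmat N * L) x) : ℝ) ≤ mu * ‖x‖ ^ 2)
    (alpha beta C : ℝ)
    (halpha : alpha = specNorm (Aᵀ * (Jmat N * L)) + Lh)
    (hbeta : beta = mu + LG * specNorm ((Pᵀ * U)⁻¹) * ‖c‖)
    (hC : C = if beta ≠ 0 then (Real.exp (2 * beta * (T - t0)) - 1) / beta
              else 2 * (T - t0)) :
    (∫ t in t0..T, ‖y t - mulVecE A (zh t)‖ ^ 2)
      ≤ ((T - t0) * C * alpha ^ 2 + 1) * (∫ t in t0..T, ‖y t - mulVecE (A * Aᵀ) (y t)‖ ^ 2)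
        + (T - t0) * ‖c‖ ^ 2 * C *
            (∫ t in t0..T, (specNorm ((1 - DP) * JG (mulVecE (A * Aᵀ) (y t)) * A)) ^ 2) := by
  simp only [specNorm_eq_norm] at hLG halpha hbeta ⊢
  have hDPnorm : ‖DP‖ ≤ ‖(Pᵀ * U)⁻¹‖ :=
    hDP ▸ norm_mul_mul_transpose_le hU hP.transpose_mul_self _
  have hw := integral_norm_transpose_sub_sq_le ht.le hA1 hA2 hLh hLG hmu hDPnorm hy hz hz0
  rw [← halpha, ← hbeta] at hw
  have hC2 : C = 2 * ∫ s in 0..T - t0, exp (2 * beta * s) := by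
    rcases eq_or_ne beta 0 with hβ | hβ
    · simp [hC, hβ]
    · rw [hC, if_pos hβ, integral_exp_mul (mul_ne_zero two_ne_zero hβ)]
      field_simp
  rw [integral_norm_sub_mulVecE_sq hA1 ht.le (HasDerivAt.continuousOn hy)
    (HasDerivAt.continuousOn hz), hC2]
  linear_combination hw

/-- a priori error estimate for the gradient-preserving hyper-reduction,
for a fixed parameter. -/
theorem stmt_6 (t0 T : ℝ) (ht : t0 < T) (N k d m : ℕ)
    (hN : 0 < N) (hk : 0 < k) (hd : 0 < d) (hm : 0 < m)
    (L : Matrix (Fin N ⊕ Fin N) (Fin N ⊕ Fin N) ℝ)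
    (f : EuclideanSpace ℝ (Fin N ⊕ Fin N))
    (c : EuclideanSpace ℝ (Fin d))
    (G : EuclideanSpace ℝ (Fin N ⊕ Fin N) → EuclideanSpace ℝ (Fin d))
    (JG : EuclideanSpace ℝ (Fin N ⊕ Fin N) → Matrix (Fin d) (Fin N ⊕ Fin N) ℝ)
    (hG : ∀ x, HasFDerivAt G (toCLM (JG x)) x) (hJGcont : Continuous JG)
    (A : Matrix (Fin N ⊕ Fin N) (Fin k ⊕ Fin k) ℝ)
    (hA1 : Aᵀ * A = 1) (hA2 : Aᵀ * Jmat N * A = Jmat k)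
    (U : Matrix (Fin d) (Fin m) ℝ) (hU : Uᵀ * U = 1)
    (P : Matrix (Fin d) (Fin m) ℝ) (hP : IsSelection P) (hPU : IsUnit (Pᵀ * U))
    (DP : Matrix (Fin d) (Fin d) ℝ) (hDP : DP = U * (Pᵀ * U)⁻¹ * Pᵀ)
    (y : ℝ → EuclideanSpace ℝ (Fin N ⊕ Fin N))
    (zh : ℝ → EuclideanSpace ℝ (Fin k ⊕ Fin k))
    (hy : ∀ t ∈ Set.Icc t0 T,
      HasDerivAt y (mulVecE (Jmat N) (mulVecE L (y t) + f + mulVecE (JG (y t))ᵀ c)) t)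
    (hz : ∀ t ∈ Set.Icc t0 T,
      HasDerivAt zh (mulVecE (Jmat k)
        (mulVecE (Aᵀ * L * A) (zh t) + mulVecE Aᵀ f
          + mulVecE (Aᵀ * (JG (mulVecE A (zh t)))ᵀ * DPᵀ) c)) t)
    (hz0 : zh t0 = mulVecE Aᵀ (y t0))
    (Lh LG mu : ℝ)
    (hLh : ∀ x x' : EuclideanSpace ℝ (Fin N ⊕ Fin N),
      ‖mulVecE (JG x)ᵀ c - mulVecE (JG x')ᵀ c‖ ≤ Lh * ‖x - x'‖)
    (hLG : ∀ x x' : EuclideanSpace ℝ (Fin N ⊕ Fin N),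
      specNorm (JG x - JG x') ≤ LG * ‖x - x'‖)
    (hmu : ∀ x : EuclideanSpace ℝ (Fin N ⊕ Fin N),
      (inner ℝ x (mulVecE (Jmat N * L) x) : ℝ) ≤ mu * ‖x‖ ^ 2)
    (alpha beta C : ℝ)
    (halpha : alpha = specNorm (Aᵀ * (Jmat N * L)) + Lh)
    (hbeta : beta = mu + LG * specNorm ((Pᵀ * U)⁻¹) * ‖c‖)
    (hC : C = if beta ≠ 0 then (Real.exp (2 * beta * (T - t0)) - 1) / beta
              else 2 * (T - t0)) :
    (∫ t in t0..T, ‖y t - mulVecE A (zh t)‖ ^ 2)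
      ≤ ((T - t0) * C * alpha ^ 2 + 1) * (∫ t in t0..T, ‖y t - mulVecE (A * Aᵀ) (y t)‖ ^ 2)
        + (T - t0) * ‖c‖ ^ 2 * C *
            (∫ t in t0..T, (specNorm ((1 - DP) * JG (mulVecE (A * Aᵀ) (y t)) * A)) ^ 2) :=
  stmt_6_general t0 T ht N k d m L f c JG A hA1 hA2 U hU P hP DP hDP y zh hy hz hz0 Lh LG mu hLh hLG
    hmu alpha beta C halpha hbeta hC
end

section
/- (Hamiltonian conservation error of the hyper-reduced model.) Let L ∈ ℝ^{2N×2N}, f ∈ ℝ^{2N}, 𝒢 ∈ ℝ, c ∈ ℝ^d, G : ℝ^{2N} → ℝ^d, A ∈ ℝ^{2N×2k}, and let ℙ ∈ ℝ^{d×d} be any matrix. Define H(y) := ½ yᵀLy + yᵀf + 𝒢 + cᵀG(y) and H_hr(z) := ½ zᵀ(AᵀLA)z + zᵀ(Aᵀf) + 𝒢 + cᵀℙG(Az). Let (y^j)_{j=0}^{n_t} ⊂ ℝ^{2N} and (ẑ^j)_{j=0}^{n_t} ⊂ ℝ^{2k} be arbitrary sequences (numerical approximations of the full and hyper-reduced trajectories)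 such that y^0 = A Aᵀ y^0 (y^0 lies in the column space of A), ẑ^0 = Aᵀ y^0, and ℙ G(A ẑ^0) = G(A ẑ^0). Then for every j, |H(y^j) − H(A ẑ^j)| ≤ |cᵀ(I − ℙ) G(A ẑ^j)| + |H(y^j) − H(y^0)| + |H_hr(ẑ^j) − H_hr(ẑ^0)|. -/
open Matrix
open scoped RealInnerProductSpace

/-- Hamiltonian conservation error of the hyper-reduced model. -/
theorem stmt_7 (N k d : ℕ) (nt : ℕ)
    (L : Matrix (Fin (2 * N)) (Fin (2 * N)) ℝ)
    (f : Fin (2 * N) → ℝ) (g : ℝ) (c : Fin d → ℝ)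
    (G : (Fin (2 * N) → ℝ) → (Fin d → ℝ))
    (A : Matrix (Fin (2 * N)) (Fin (2 * k)) ℝ)
    (DP : Matrix (Fin d) (Fin d) ℝ)
    (H : (Fin (2 * N) → ℝ) → ℝ)
    (hH : ∀ yv, H yv = (1 / 2) * (yv ⬝ᵥ (L *ᵥ yv)) + yv ⬝ᵥ f + g + c ⬝ᵥ G yv)
    (Hhr : (Fin (2 * k) → ℝ) → ℝ)
    (hHhr : ∀ zv, Hhr zv = (1 / 2) * (zv ⬝ᵥ ((Aᵀ * L * A) *ᵥ zv)) + zv ⬝ᵥ (Aᵀ *ᵥ f) + g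
      + c ⬝ᵥ (DP *ᵥ G (A *ᵥ zv)))
    (y : ℕ → (Fin (2 * N) → ℝ)) (zh : ℕ → (Fin (2 * k) → ℝ))
    (hy0 : y 0 = (A * Aᵀ) *ᵥ (y 0))
    (hz0 : zh 0 = Aᵀ *ᵥ (y 0))
    (hG0 : DP *ᵥ G (A *ᵥ zh 0) = G (A *ᵥ zh 0)) :
    ∀ j ≤ nt,
      |H (y j) - H (A *ᵥ zh j)| ≤
        |c ⬝ᵥ ((1 - DP) *ᵥ G (A *ᵥ zh j))| + |H (y j) - H (y 0)| + |Hhr (zh j) - Hhr (zh 0)| := by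
  intro j _
  have key : ∀ z : Fin (2 * k) → ℝ,
      H (A *ᵥ z) = Hhr z + c ⬝ᵥ ((1 - DP) *ᵥ G (A *ᵥ z)) := by
    intro z
    rw [hH, hHhr]
    have h1 : (A *ᵥ z) ⬝ᵥ (L *ᵥ (A *ᵥ z)) = z ⬝ᵥ ((Aᵀ * L * A) *ᵥ z) := by
      rw [← Matrix.mulVec_mulVec, ← Matrix.mulVec_mulVec, Matrix.dotProduct_mulVec z,
        Matrix.vecMul_transpose, Matrix.dotProduct_mulVec (A *ᵥ z)]
    have h2 : (A *ᵥ z) ⬝ᵥ f = z ⬝ᵥ (Aᵀ *ᵥ f) := by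
      rw [Matrix.dotProduct_mulVec z, Matrix.vecMul_transpose, dotProduct_comm]
    have h3 : c ⬝ᵥ G (A *ᵥ z)
        = c ⬝ᵥ (DP *ᵥ G (A *ᵥ z)) + c ⬝ᵥ ((1 - DP) *ᵥ G (A *ᵥ z)) := by
      rw [← dotProduct_add, ← Matrix.add_mulVec]
      simp
    rw [h1, h2, h3]; ring
  have hA0 : A *ᵥ zh 0 = y 0 := by
    rw [hz0, Matrix.mulVec_mulVec, ← hy0]
  have hH0 : H (y 0) = Hhr (zh 0) := by
    rw [← hA0, key]
    simp [Matrix.sub_mulVec, hG0]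
  have heq : H (y j) - H (A *ᵥ zh j)
      = -(c ⬝ᵥ ((1 - DP) *ᵥ G (A *ᵥ zh j))) + (H (y j) - H (y 0))
        + -(Hhr (zh j) - Hhr (zh 0)) := by
    rw [key, hH0]; ring
  rw [heq]
  calc |(-(c ⬝ᵥ ((1 - DP) *ᵥ G (A *ᵥ zh j))) + (H (y j) - H (y 0))
        + -(Hhr (zh j) - Hhr (zh 0)))|
      ≤ |(-(c ⬝ᵥ ((1 - DP) *ᵥ G (A *ᵥ zh j))) + (H (y j) - H (y 0)))|
        + |(-(Hhr (zh j) - Hhr (zh 0)))| := abs_add_le _ _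
    _ ≤ |(-(c ⬝ᵥ ((1 - DP) *ᵥ G (A *ᵥ zh j))))| + |H (y j) - H (y 0)|
        + |(-(Hhr (zh j) - Hhr (zh 0)))| := by
        gcongr; exact abs_add_le _ _
    _ = _ := by rw [abs_neg, abs_neg]
end

section
/- (Optimal rank-r update: value of the minimum.) Let M ∈ ℝ^{p×w}, let C ∈ ℝ^{m×w} have full row rank m (so W := C Cᵀ is positive definite), and let r ≤ m. Let N := W^{-1/2} C Mᵀ M Cᵀ W^{-1/2}, where W^{-1/2} is the inverse of the positive-definite square root of W, and let λ₁ ≥ λ₂ ≥ … ≥ λ_m ≥ 0 be the eigenvalues of the symmetric positive-semidefinite matrix N in decreasing order. Then the infimum over all a ∈ ℝ^{p×r} and b ∈ ℝ^{m×r} of ‖M + a bᵀ C‖_F² equals ‖M‖_F² − (λ₁ + … + λ_r), and this infimum is attained. -/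
/-!
Put `S = (C Cᵀ)^{1/2}`, `U = S⁻¹ C` and `G = M Uᵀ`. The rows of `U` are orthonormal and
`Gᵀ G = N`, so with `c = S b` one has `‖M + a bᵀ C‖² = ‖M‖² - ‖G‖² + ‖G + a cᵀ‖²` and the problem
becomes the Eckart–Young problem for `G`. If `Q` is the orthogonal projection onto the column
space of `c`, then `‖G + a cᵀ‖² ≥ ‖G (1 - Q)‖² = ‖G‖² - tr (N Q)`. In an eigenbasis of `N`,
`tr (N Q) = ∑ λⱼ qⱼ` with `0 ≤ qⱼ ≤ 1` and `∑ qⱼ = rank Q ≤ r`, which is at most `λ₁ + ⋯ + λ_r`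
(Ky Fan). Equality holds for `c` made of orthonormal eigenvectors of `λ₁, …, λ_r` and `a = -G c`.
-/
open Matrix
open scoped RealInnerProductSpace

/-- The positive semidefinite square root of a positive semidefinite matrix (the definition
`Matrix.PosSemidef.sqrt` of the older Mathlib, which has since been removed). -/
noncomputable def psdSqrt {n : Type*} [Fintype n] [DecidableEq n]
    {A : Matrix n n ℝ} (hA : A.PosSemidef) : Matrix n n ℝ :=
  hA.1.eigenvectorUnitary.1 * diagonal ((↑) ∘ Real.sqrt ∘ hA.1.eigenvalues) *
    (star hA.1.eigenvectorUnitary : Matrix n n ℝ)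

section Frobenius

variable {ι κ : Type*} [Fintype ι] [Fintype κ]

lemma frobSq_eq_trace (A : Matrix ι κ ℝ) : frobSq A = trace (Aᵀ * A) := by
  simp only [frobSq, trace, diag, mul_apply, transpose_apply, sq]
  exact Finset.sum_comm

lemma frobSq_nonneg (A : Matrix ι κ ℝ) : 0 ≤ frobSq A := by
  unfold frobSq; positivity

lemma frobSq_add (A B : Matrix ι κ ℝ) :
    frobSq (A + B) = frobSq A + 2 * trace (Aᵀ * B) + frobSq B := by
  have hBA : trace (Bᵀ * A) = trace (Aᵀ * B) := by
    rw [← trace_transpose, transpose_mul, transpose_transpose]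
  simp only [frobSq_eq_trace, transpose_add, Matrix.add_mul, Matrix.mul_add, trace_add, hBA]
  ring

lemma frobSq_add_mul_of_mul_transpose_eq_one {κ' : Type*} [Fintype κ'] [DecidableEq κ']
    {U : Matrix κ' κ ℝ} (hU : U * Uᵀ = 1) (M : Matrix ι κ ℝ) (B : Matrix ι κ' ℝ) :
    frobSq (M + B * U) = frobSq M - frobSq (M * Uᵀ) + frobSq (M * Uᵀ + B) := by
  have hcross : trace (Mᵀ * (B * U)) = trace ((M * Uᵀ)ᵀ * B) := by
    rw [← Matrix.mul_assoc, trace_mul_comm, transpose_mul, transpose_transpose, Matrix.mul_assoc]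
  have hBU : frobSq (B * U) = frobSq B := by
    rw [frobSq_eq_trace, frobSq_eq_trace, transpose_mul, Matrix.mul_assoc, trace_mul_comm,
      Matrix.mul_assoc, Matrix.mul_assoc, hU, Matrix.mul_one]
  rw [frobSq_add, frobSq_add, hcross, hBU]
  ring

end Frobenius

lemma IsStarProjection.star_mul_mul {R : Type*} [Monoid R] [StarMul R] {p u : R}
    (hp : IsStarProjection p) (hu : u * star u = 1) : IsStarProjection (star u * p * u) where
  isIdempotentElem := by
    rw [IsIdempotentElem, show star u * p * u * (star u * p * u) =
      star u * (p * (u * star u) * p) * u by simp only [mul_assoc], hu, mul_one,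
      hp.isIdempotentElem.eq, mul_assoc]
  isSelfAdjoint := by
    rw [IsSelfAdjoint, star_mul, star_mul, star_star, hp.isSelfAdjoint.star_eq, mul_assoc]

namespace Matrix

variable {n : Type*} [Fintype n]

lemma isStarProjection_iff_mul_self_and_transpose {Q : Matrix n n ℝ} :
    IsStarProjection Q ↔ Q * Q = Q ∧ Qᵀ = Q := by
  rw [isStarProjection_iff, IsSelfAdjoint, star_eq_conjTranspose,
    conjTranspose_eq_transpose_of_trivial, IsIdempotentElem]

lemma isStarProjection_transpose_mul_self {δ : Type*} [Fintype δ] [DecidableEq δ]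
    {F : Matrix δ n ℝ} (hF : F * Fᵀ = 1) : IsStarProjection (Fᵀ * F) := by
  refine isStarProjection_iff_mul_self_and_transpose.2
    ⟨?_, by rw [transpose_mul, transpose_transpose]⟩
  rw [Matrix.mul_assoc, ← Matrix.mul_assoc F, hF, Matrix.one_mul]

lemma exists_isStarProjection_trace_le_mul_eq {κ : Type*} [Fintype κ] (c : Matrix n κ ℝ) :
    ∃ Q : Matrix n n ℝ, IsStarProjection Q ∧ Q.trace ≤ Fintype.card κ ∧ Q * c = c := by
  let col : κ → EuclideanSpace ℝ n := fun k => WithLp.toLp 2 (cᵀ k)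
  let V := Submodule.span ℝ (Set.range col)
  let b := stdOrthonormalBasis ℝ V
  let F : Matrix (Fin (Module.finrank ℝ V)) n ℝ := of fun l i => (b l : EuclideanSpace ℝ n) i
  have hF : F * Fᵀ = 1 := by
    ext l l'
    have := orthonormal_iff_ite.1 b.orthonormal l' l
    simpa [F, mul_apply, one_apply, Submodule.coe_inner, PiLp.inner_apply, eq_comm] using this
  refine ⟨Fᵀ * F, isStarProjection_transpose_mul_self hF, ?_, ?_⟩
  · rw [trace_mul_comm, hF, trace_one, Fintype.card_fin]
    exact_mod_cast finrank_range_le_card col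
  · ext i k
    have hk : col k ∈ V := Submodule.subset_span (Set.mem_range_self k)
    have hproj := b.orthogonalProjectionOnto_apply_eq_sum (col k)
    rw [Submodule.orthogonalProjectionOnto_mem_subspace_eq_self ⟨col k, hk⟩] at hproj
    have := congrArg (fun v : V => (v : EuclideanSpace ℝ n) i) hproj
    simpa [F, col, mul_apply, PiLp.inner_apply, Finset.mul_sum, mul_comm, mul_left_comm,
      Finset.sum_comm (γ := n)] using this.symm

open scoped MatrixOrder in
lemma IsStarProjection.diag_mem_Icc [DecidableEq n] {Q : Matrix n n ℝ}
    (hQ : IsStarProjection Q) (j : n) : Q j j ∈ Set.Icc 0 1 := by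
  obtain ⟨h0, h1⟩ := hQ.mem_Icc
  have h1' := (le_iff.1 h1).diag_nonneg (i := j)
  rw [sub_apply, one_apply_eq, sub_nonneg] at h1'
  exact ⟨(nonneg_iff_posSemidef.1 h0).diag_nonneg, h1'⟩

end Matrix

section StarProjection

variable {ι κ : Type*} [Fintype ι] [Fintype κ] [DecidableEq κ] {Q : Matrix κ κ ℝ}

lemma frobSq_mul_add_frobSq_mul_one_sub (hQ : IsStarProjection Q) (A : Matrix ι κ ℝ) :
    frobSq (A * Q) + frobSq (A * (1 - Q)) = frobSq A := by
  have hQt := (isStarProjection_iff_mul_self_and_transpose.1 hQ).2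
  have hcross : trace ((A * Q)ᵀ * (A * (1 - Q))) = 0 := by
    rw [transpose_mul, hQt, Matrix.mul_assoc, trace_mul_comm, Matrix.mul_assoc,
      Matrix.mul_assoc, hQ.one_sub_mul_self, Matrix.mul_zero, Matrix.mul_zero, trace_zero]
  have hsplit := frobSq_add (A * Q) (A * (1 - Q))
  rw [← Matrix.mul_add, add_sub_cancel, Matrix.mul_one, hcross] at hsplit
  linarith

lemma frobSq_mul_le (hQ : IsStarProjection Q) (A : Matrix ι κ ℝ) :
    frobSq (A * Q) ≤ frobSq A := by
  rw [← frobSq_mul_add_frobSq_mul_one_sub hQ A]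
  linarith [frobSq_nonneg (A * (1 - Q))]

lemma frobSq_mul_one_sub (hQ : IsStarProjection Q) (A : Matrix ι κ ℝ) :
    frobSq (A * (1 - Q)) = frobSq A - trace (Aᵀ * A * Q) := by
  have hAQ : frobSq (A * Q) = trace (Aᵀ * A * Q) := by
    obtain ⟨hQQ, hQt⟩ := isStarProjection_iff_mul_self_and_transpose.1 hQ
    rw [frobSq_eq_trace, transpose_mul, hQt, Matrix.mul_assoc, trace_mul_comm, Matrix.mul_assoc,
      Matrix.mul_assoc, hQQ, Matrix.mul_assoc]
  rw [← frobSq_mul_add_frobSq_mul_one_sub hQ A, hAQ]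
  ring

end StarProjection

lemma Finset.sum_mul_le_sum_of_forall_le {ι : Type*} [Fintype ι] [DecidableEq ι] {s : Finset ι}
    {lam t : ι → ℝ} (hlam : ∀ i, 0 ≤ lam i) (htop : ∀ i ∈ s, ∀ j ∉ s, lam j ≤ lam i)
    (ht : ∀ i, t i ∈ Set.Icc 0 1) (hsum : ∑ i, t i ≤ s.card) :
    ∑ i, lam i * t i ≤ ∑ i ∈ s, lam i := by
  obtain ⟨τ, hτ, hin, hout⟩ : ∃ τ, 0 ≤ τ ∧ (∀ i ∈ s, τ ≤ lam i) ∧ ∀ j ∉ s, lam j ≤ τ := by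
    by_cases hs : sᶜ.Nonempty
    · obtain ⟨j₀, hj₀, hmax⟩ := sᶜ.exists_max_image lam hs
      exact ⟨lam j₀, hlam j₀, fun i hi => htop i hi j₀ (mem_compl.1 hj₀),
        fun j hj => hmax j (mem_compl.2 hj)⟩
    · exact ⟨0, le_rfl, fun i _ => hlam i, fun j hj => absurd ⟨j, mem_compl.2 hj⟩ hs⟩
  calc ∑ i, lam i * t i = ∑ i, (lam i - τ) * t i + τ * ∑ i, t i := by
        rw [mul_sum, ← sum_add_distrib]; ring_nf
    _ ≤ ∑ i ∈ s, (lam i - τ) * t i + τ * s.card := by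
        rw [← sum_add_sum_compl s]
        gcongr
        · exact add_le_of_nonpos_right <| sum_nonpos fun j hj =>
            mul_nonpos_of_nonpos_of_nonneg (sub_nonpos.2 (hout j (mem_compl.1 hj))) (ht j).1
    _ ≤ ∑ i ∈ s, (lam i - τ) + τ * s.card := by
        gcongr with i hi
        exact mul_le_of_le_one_right (sub_nonneg.2 (hin i hi)) (ht i).2
    _ = ∑ i ∈ s, lam i := by
        rw [sum_sub_distrib, sum_const, nsmul_eq_mul]; ring

namespace Matrix

variable {n κ : Type*} [Fintype n] [DecidableEq n] [Fintype κ]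

lemma IsHermitian.star_eigenvectorUnitary_mul_mul {N : Matrix n n ℝ} (hN : N.IsHermitian) :
    star (hN.eigenvectorUnitary : Matrix n n ℝ) * N * hN.eigenvectorUnitary =
      diagonal hN.eigenvalues := by
  simpa [Unitary.conjStarAlgAut_star_apply] using hN.conjStarAlgAut_star_eigenvectorUnitary

lemma IsHermitian.trace_mul_le_sum_eigenvalues {N : Matrix n n ℝ} (hN : N.IsHermitian)
    (hev : ∀ j, 0 ≤ hN.eigenvalues j) (e : κ ↪ n)
    (htop : ∀ k, ∀ j ∉ Set.range e, hN.eigenvalues j ≤ hN.eigenvalues (e k))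
    {Q : Matrix n n ℝ} (hQ : IsStarProjection Q) (htr : Q.trace ≤ Fintype.card κ) :
    trace (N * Q) ≤ ∑ k, hN.eigenvalues (e k) := by
  set V : Matrix n n ℝ := (hN.eigenvectorUnitary : Matrix n n ℝ)
  have hV : V * star V = 1 := Unitary.mul_star_self_of_mem hN.eigenvectorUnitary.2
  set P := star V * Q * V
  have hP : IsStarProjection P := hQ.star_mul_mul hV
  have htr_conj : ∀ X, trace (star V * X * V) = trace X := fun X => by
    rw [trace_mul_comm, ← Matrix.mul_assoc, hV, Matrix.one_mul]
  have htrN : trace (N * Q) = ∑ j, hN.eigenvalues j * P j j := by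
    have hdiag : star V * N * V = diagonal hN.eigenvalues := hN.star_eigenvectorUnitary_mul_mul
    calc trace (N * Q) = trace (star V * (N * Q) * V) := (htr_conj _).symm
      _ = trace (star V * N * V * P) := by
          simp only [P, ← Matrix.mul_assoc, Matrix.mul_assoc _ V (star V), hV, Matrix.mul_one]
      _ = ∑ j, hN.eigenvalues j * P j j := by simp [hdiag, trace, diagonal_mul]
  rw [htrN, ← Finset.sum_map Finset.univ e]
  refine Finset.sum_mul_le_sum_of_forall_le hev ?_ hP.diag_mem_Icc ?_
  · simp only [Finset.mem_map, Finset.mem_univ, true_and, forall_exists_index]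
    rintro _ k rfl j hj
    exact htop k j (by simpa using hj)
  · rw [Finset.card_map, Finset.card_univ]
    exact (htr_conj Q).trans_le htr

theorem IsHermitian.isLeast_frobSq_add_mul_transpose {ι : Type*} [Fintype ι] [DecidableEq κ]
    (G : Matrix ι n ℝ) (hN : (Gᵀ * G).IsHermitian)
    (e : κ ↪ n) (htop : ∀ k, ∀ j ∉ Set.range e, hN.eigenvalues j ≤ hN.eigenvalues (e k)) :
    IsLeast {x | ∃ (a : Matrix ι κ ℝ) (c : Matrix n κ ℝ), x = frobSq (G + a * cᵀ)}
      (frobSq G - ∑ k, hN.eigenvalues (e k)) := by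
  constructor
  · let V : Matrix n n ℝ := hN.eigenvectorUnitary
    let c : Matrix n κ ℝ := V.submatrix id e
    have hVt : Vᵀ = star V := by rw [star_eq_conjTranspose, conjTranspose_eq_transpose_of_trivial]
    have hc : cᵀ * c = 1 := by
      rw [transpose_submatrix, ← submatrix_mul _ _ _ _ _ Function.bijective_id, hVt,
        Unitary.star_mul_self_of_mem hN.eigenvectorUnitary.2, submatrix_one_embedding]
    have hQ : IsStarProjection (c * cᵀ) := by
      simpa using isStarProjection_transpose_mul_self (F := cᵀ) (by simpa using hc)
    refine ⟨-(G * c), c, ?_⟩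
    have hcNc : cᵀ * (Gᵀ * G) * c = diagonal (hN.eigenvalues ∘ e) := by
      rw [← submatrix_diagonal_embedding, ← hN.star_eigenvectorUnitary_mul_mul, ← hVt,
        submatrix_mul _ _ _ id _ Function.bijective_id,
        submatrix_mul _ _ _ id _ Function.bijective_id, submatrix_id_id, transpose_submatrix]
    have hGc : G + -(G * c) * cᵀ = G * (1 - c * cᵀ) := by
      rw [Matrix.mul_sub, Matrix.mul_one, Matrix.neg_mul, Matrix.mul_assoc, sub_eq_add_neg]
    rw [hGc, frobSq_mul_one_sub hQ, ← Matrix.mul_assoc, trace_mul_comm, ← Matrix.mul_assoc,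
      hcNc, trace_diagonal]
    rfl
  · rintro _ ⟨a, c, rfl⟩
    obtain ⟨Q, hQ, htr, hQc⟩ := exists_isStarProjection_trace_le_mul_eq c
    have hev : ∀ j, 0 ≤ hN.eigenvalues j := by
      simpa using (posSemidef_conjTranspose_mul_self G).eigenvalues_nonneg
    have hcQ : cᵀ * (1 - Q) = 0 := by
      rw [Matrix.mul_sub, Matrix.mul_one, ← (isStarProjection_iff_mul_self_and_transpose.1 hQ).2,
        ← transpose_mul, hQc, sub_self]
    calc frobSq G - ∑ k, hN.eigenvalues (e k) ≤ frobSq G - trace (Gᵀ * G * Q) := by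
          linarith [hN.trace_mul_le_sum_eigenvalues hev e htop hQ htr]
      _ = frobSq ((G + a * cᵀ) * (1 - Q)) := by
          rw [Matrix.add_mul, Matrix.mul_assoc a, hcQ, Matrix.mul_zero, add_zero,
            frobSq_mul_one_sub hQ]
      _ ≤ frobSq (G + a * cᵀ) := frobSq_mul_le hQ.one_sub _

end Matrix

section PsdSqrt

variable {n : Type*} [Fintype n] [DecidableEq n]

lemma psdSqrt_mul_self {A : Matrix n n ℝ} (hA : A.PosSemidef) : psdSqrt hA * psdSqrt hA = A := by
  set V : Matrix n n ℝ := (hA.1.eigenvectorUnitary : Matrix n n ℝ)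
  have hV : star V * V = 1 := Unitary.star_mul_self_of_mem hA.1.eigenvectorUnitary.2
  have hsqrt : diagonal ((↑) ∘ Real.sqrt ∘ hA.1.eigenvalues) *
      diagonal ((↑) ∘ Real.sqrt ∘ hA.1.eigenvalues) = diagonal hA.1.eigenvalues := by
    rw [diagonal_mul_diagonal]
    congr 1
    ext i
    exact Real.mul_self_sqrt (hA.eigenvalues_nonneg i)
  conv_rhs => rw [hA.1.spectral_theorem, Unitary.conjStarAlgAut_apply]
  calc psdSqrt hA * psdSqrt hA =
      V * diagonal ((↑) ∘ Real.sqrt ∘ hA.1.eigenvalues) * (star V * V) *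
        diagonal ((↑) ∘ Real.sqrt ∘ hA.1.eigenvalues) * star V := by
        simp only [psdSqrt, V, Matrix.mul_assoc]
    _ = _ := by
        rw [hV, Matrix.mul_one, Matrix.mul_assoc V, hsqrt]
        rfl

lemma psdSqrt_transpose {A : Matrix n n ℝ} (hA : A.PosSemidef) : (psdSqrt hA)ᵀ = psdSqrt hA := by
  simp [psdSqrt, transpose_mul, star_eq_conjTranspose, Matrix.mul_assoc]

lemma isUnit_det_psdSqrt {A : Matrix n n ℝ} (hA : A.PosDef) : IsUnit (psdSqrt hA.posSemidef).det :=
  isUnit_of_mul_isUnit_left (y := (psdSqrt hA.posSemidef).det) <| by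
    rw [← det_mul, psdSqrt_mul_self]
    exact hA.det_pos.ne'.isUnit

end PsdSqrt

lemma inv_mul_mul_transpose_eq_one {m n : Type*} [Fintype m] [DecidableEq m] [Fintype n]
    {C : Matrix m n ℝ} {S : Matrix m m ℝ} (hSS : S * S = C * Cᵀ) (hSt : Sᵀ = S)
    (hS : IsUnit S.det) : S⁻¹ * C * (S⁻¹ * C)ᵀ = 1 := by
  calc S⁻¹ * C * (S⁻¹ * C)ᵀ = S⁻¹ * (S * S) * S⁻¹ := by
        rw [hSS, transpose_mul, transpose_nonsing_inv, hSt]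
        simp only [Matrix.mul_assoc]
    _ = 1 := by
        rw [← Matrix.mul_assoc, nonsing_inv_mul _ hS, Matrix.one_mul, mul_nonsing_inv _ hS]

theorem stmt_12_general (p w m r : ℕ) (hr : r ≤ m)
    (M : Matrix (Fin p) (Fin w) ℝ) (C : Matrix (Fin m) (Fin w) ℝ)
    (hW : (C * Cᵀ).PosDef)
    (N : Matrix (Fin m) (Fin m) ℝ)
    (hNdef : N = (psdSqrt hW.posSemidef)⁻¹ * (C * Mᵀ * M * Cᵀ) * (psdSqrt hW.posSemidef)⁻¹)
    (hN : N.IsHermitian)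
    (lam : Fin m → ℝ) (hmono : Antitone lam)
    (hperm : ∃ σ : Equiv.Perm (Fin m), ∀ i, lam i = hN.eigenvalues (σ i)) :
    IsLeast {x : ℝ | ∃ (a : Matrix (Fin p) (Fin r) ℝ) (b : Matrix (Fin m) (Fin r) ℝ),
        x = frobSq (M + a * bᵀ * C)}
      (frobSq M - ∑ i : Fin r, lam (Fin.castLE hr i)) := by
  obtain ⟨σ, hσ⟩ := hperm
  set S := psdSqrt hW.posSemidef
  have hSt : Sᵀ = S := psdSqrt_transpose _
  have hS : IsUnit S.det := isUnit_det_psdSqrt hW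
  set U := S⁻¹ * C
  have hU : U * Uᵀ = 1 := inv_mul_mul_transpose_eq_one (psdSqrt_mul_self _) hSt hS
  have hG : (M * Uᵀ)ᵀ * (M * Uᵀ) = N := by
    rw [hNdef, transpose_mul, transpose_transpose, transpose_mul, transpose_nonsing_inv, hSt]
    simp only [U, Matrix.mul_assoc]
  subst hG
  have hreparam : ∀ (a : Matrix (Fin p) (Fin r) ℝ) (b : Matrix (Fin m) (Fin r) ℝ),
      frobSq (M + a * bᵀ * C) = frobSq M - frobSq (M * Uᵀ) + frobSq (M * Uᵀ + a * (S * b)ᵀ) :=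
    fun a b => by
      rw [← frobSq_add_mul_of_mul_transpose_eq_one hU, transpose_mul, hSt]
      simp only [U, Matrix.mul_assoc, mul_nonsing_inv_cancel_left _ _ hS]
  let e : Fin r ↪ Fin m := (Fin.castLEEmb hr).trans σ.toEmbedding
  have htop : ∀ k, ∀ j ∉ Set.range e, hN.eigenvalues j ≤ hN.eigenvalues (e k) := by
    intro k j hj
    obtain ⟨i, rfl⟩ := σ.surjective j
    rw [← hσ, show e k = σ (Fin.castLE hr k) from rfl, ← hσ]
    exact hmono (not_lt.1 fun hlt => hj ⟨⟨i, (Fin.lt_def.1 hlt).trans k.2⟩, rfl⟩)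
  have hsum : ∑ k, hN.eigenvalues (e k) = ∑ i : Fin r, lam (Fin.castLE hr i) := by
    simp [e, hσ]
  obtain ⟨⟨a, c, hmin⟩, hlower⟩ := hN.isLeast_frobSq_add_mul_transpose (M * Uᵀ) e htop
  refine ⟨⟨a, S⁻¹ * c, ?_⟩, ?_⟩
  · rw [hreparam, ← Matrix.mul_assoc, mul_nonsing_inv _ hS, Matrix.one_mul, ← hmin, ← hsum]
    ring
  · rintro _ ⟨a, b, rfl⟩
    have := hlower ⟨a, S * b, rfl⟩
    rw [hreparam, ← hsum]
    linarith

/-- optimal rank-`r` update: the minimum of `‖M + a bᵀ C‖_F²` over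
`a ∈ ℝ^{p×r}`, `b ∈ ℝ^{m×r}` equals `‖M‖_F² − (λ₁ + … + λ_r)`, where the `λᵢ` are the
decreasingly ordered eigenvalues of `N = W^{-1/2} C Mᵀ M Cᵀ W^{-1/2}`, `W = CCᵀ`. -/
theorem stmt_12 (p w m r : ℕ) (hr : r ≤ m)
    (M : Matrix (Fin p) (Fin w) ℝ) (C : Matrix (Fin m) (Fin w) ℝ)
    (hrank : C.rank = m)
    (hW : (C * Cᵀ).PosDef)
    (N : Matrix (Fin m) (Fin m) ℝ)
    (hNdef : N = (psdSqrt hW.posSemidef)⁻¹ * (C * Mᵀ * M * Cᵀ) * (psdSqrt hW.posSemidef)⁻¹)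
    (hN : N.IsHermitian)
    (lam : Fin m → ℝ) (hmono : Antitone lam)
    (hperm : ∃ σ : Equiv.Perm (Fin m), ∀ i, lam i = hN.eigenvalues (σ i)) :
    IsLeast {x : ℝ | ∃ (a : Matrix (Fin p) (Fin r) ℝ) (b : Matrix (Fin m) (Fin r) ℝ),
        x = frobSq (M + a * bᵀ * C)}
      (frobSq M - ∑ i : Fin r, lam (Fin.castLE hr i)) :=
  stmt_12_general p w m r hr M C hW N hNdef hN lam hmono hperm
end

section
/- (Unconstrained Frobenius least squares and rank of the minimizer.) Let M ∈ ℝ^{p×w} and let C ∈ ℝ^{m×w} have full row rank m, and set ℂ := Cᵀ(C Cᵀ)^{-1} C ∈ ℝ^{w×w}. Then for every N ∈ ℝ^{p×m}, ‖M + N C‖_F ≥ ‖M (I − ℂ)‖_F, with equality for N* := −M Cᵀ (C Cᵀ)^{-1}; moreover rank(N*) = rank(M Cᵀ). Consequently, the optimal update of the DEIM basis of rank r̄ = rank(M Cᵀ) achieves the residual ‖M(I − ℂ)‖_F at the sampled rows. -/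
open Matrix
open scoped RealInnerProductSpace

lemma aux_isUnit_det_of_rank_eq {m : ℕ} (A : Matrix (Fin m) (Fin m) ℝ) (h : A.rank = m) :
    IsUnit A.det := by
  rw [isUnit_iff_ne_zero]
  intro hdet
  obtain ⟨v, hv, hmv⟩ := (Matrix.exists_mulVec_eq_zero_iff).2 hdet
  have hker : v ∈ LinearMap.ker A.mulVecLin := by simpa [Matrix.mulVecLin_apply] using hmv
  have hrn := LinearMap.finrank_range_add_finrank_ker A.mulVecLin
  have hpos : 0 < Module.finrank ℝ (LinearMap.ker A.mulVecLin) := by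
    rw [Module.finrank_pos_iff]
    exact nontrivial_of_ne ⟨v, hker⟩ 0 (fun h => hv (by simpa using congrArg Subtype.val h))
  have hfr : Module.finrank ℝ (Fin m → ℝ) = m := by simp
  rw [hfr] at hrn
  rw [Matrix.rank] at h
  omega

lemma aux_frobSq_eq_trace {p w : ℕ} (A : Matrix (Fin p) (Fin w) ℝ) :
    frobSq A = Matrix.trace (A * Aᵀ) := by
  simp [frobSq, Matrix.trace, Matrix.mul_apply, Matrix.diag, sq]

lemma aux_frobSq_nonneg {p w : ℕ} (A : Matrix (Fin p) (Fin w) ℝ) : 0 ≤ frobSq A :=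
  Finset.sum_nonneg fun _ _ => Finset.sum_nonneg fun _ _ => sq_nonneg _

lemma aux_pythagoras {p w : ℕ} (A : Matrix (Fin p) (Fin w) ℝ)
    (P : Matrix (Fin w) (Fin w) ℝ) (hPt : Pᵀ = P) (hP2 : P * P = P) :
    frobSq A = frobSq (A * P) + frobSq (A * (1 - P)) := by
  have h1 : (A * P) * (A * P)ᵀ = A * P * Aᵀ := by
    rw [Matrix.transpose_mul, hPt, ← Matrix.mul_assoc, Matrix.mul_assoc A P P, hP2]
  have h2 : (A * (1 - P)) * (A * (1 - P))ᵀ = A * (1 - P) * Aᵀ := by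
    have ht : (1 - P)ᵀ = 1 - P := by rw [Matrix.transpose_sub, Matrix.transpose_one, hPt]
    have hsq : (1 - P) * (1 - P) = 1 - P := by
      simp [Matrix.mul_sub, Matrix.sub_mul, hP2]
    rw [Matrix.transpose_mul, ht, ← Matrix.mul_assoc, Matrix.mul_assoc A (1-P) (1-P), hsq]
  rw [aux_frobSq_eq_trace, aux_frobSq_eq_trace, aux_frobSq_eq_trace, h1, h2,
    Matrix.mul_sub, Matrix.mul_one, Matrix.sub_mul, ← Matrix.trace_add]
  congr 1
  abel

/-- unconstrained Frobenius least squares and rank of the minimizer: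
`‖M + NC‖_F ≥ ‖M(I − ℂ)‖_F` with equality for `N* = −MCᵀ(CCᵀ)⁻¹`, and
`rank(N*) = rank(MCᵀ)`. -/
theorem stmt_13 (p w m : ℕ)
    (M : Matrix (Fin p) (Fin w) ℝ) (C : Matrix (Fin m) (Fin w) ℝ)
    (hrank : C.rank = m)
    (Cproj : Matrix (Fin w) (Fin w) ℝ) (hCproj : Cproj = Cᵀ * (C * Cᵀ)⁻¹ * C)
    (Nstar : Matrix (Fin p) (Fin m) ℝ) (hNstar : Nstar = -(M * Cᵀ * (C * Cᵀ)⁻¹)) :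
    (∀ Nm : Matrix (Fin p) (Fin m) ℝ,
      frobNorm (M * (1 - Cproj)) ≤ frobNorm (M + Nm * C)) ∧
    frobNorm (M + Nstar * C) = frobNorm (M * (1 - Cproj)) ∧
    Nstar.rank = (M * Cᵀ).rank := by
  have hu : IsUnit (C * Cᵀ).det := by
    apply aux_isUnit_det_of_rank_eq
    rw [Matrix.rank_self_mul_transpose, hrank]
  have hinv : (C * Cᵀ) * (C * Cᵀ)⁻¹ = 1 := Matrix.mul_nonsing_inv _ hu
  have hinv' : (C * Cᵀ)⁻¹ * (C * Cᵀ) = 1 := Matrix.nonsing_inv_mul _ hu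
  have hCP : C * Cproj = C := by
    rw [hCproj]
    simp only [← Matrix.mul_assoc]
    rw [hinv, Matrix.one_mul]
  have hPt : Cprojᵀ = Cproj := by
    rw [hCproj, Matrix.transpose_mul, Matrix.transpose_mul, Matrix.transpose_transpose,
      Matrix.transpose_nonsing_inv, Matrix.transpose_mul, Matrix.transpose_transpose,
      Matrix.mul_assoc]
  have hCP' : C * (Cᵀ * ((C * Cᵀ)⁻¹ * C)) = C := by
    calc C * (Cᵀ * ((C * Cᵀ)⁻¹ * C)) = (C * Cᵀ * (C * Cᵀ)⁻¹) * C := by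
          simp only [Matrix.mul_assoc]
      _ = C := by rw [hinv, Matrix.one_mul]
  have hP2 : Cproj * Cproj = Cproj := by
    rw [hCproj]
    simp only [Matrix.mul_assoc, hCP']
  have key : ∀ Nm : Matrix (Fin p) (Fin m) ℝ,
      frobSq (M + Nm * C) = frobSq ((M + Nm * C) * Cproj) + frobSq (M * (1 - Cproj)) := by
    intro Nm
    have h := aux_pythagoras (M + Nm * C) Cproj hPt hP2
    have h2 : (M + Nm * C) * (1 - Cproj) = M * (1 - Cproj) := by
      simp only [Matrix.add_mul, Matrix.mul_sub, Matrix.mul_one, Matrix.mul_assoc, hCP]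
      abel
    rwa [h2] at h
  refine ⟨?_, ?_, ?_⟩
  · intro Nm
    apply Real.sqrt_le_sqrt
    rw [key Nm]
    have := aux_frobSq_nonneg ((M + Nm * C) * Cproj)
    linarith
  · have : M + Nstar * C = M * (1 - Cproj) := by
      rw [hNstar, hCproj]
      simp only [Matrix.mul_sub, Matrix.mul_one, Matrix.neg_mul, sub_eq_add_neg,
        Matrix.mul_assoc, Matrix.mul_add, Matrix.mul_neg]
    rw [this]
  · rw [hNstar]
    have : -(M * Cᵀ * (C * Cᵀ)⁻¹) = (M * Cᵀ) * (-(C * Cᵀ)⁻¹) := by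
      rw [Matrix.mul_neg]
    rw [this]
    apply Matrix.rank_mul_eq_left_of_isUnit_det
    rw [Matrix.det_neg, Fintype.card_fin]
    exact ((isUnit_one.neg).pow m).mul ((C * Cᵀ).isUnit_nonsing_inv_det hu)
end

section
/- (Hamiltonian conservation error of the adaptive hyper-reduced model.) Let L ∈ ℝ^{2N×2N}, f ∈ ℝ^{2N}, 𝒢 ∈ ℝ, c ∈ ℝ^d, G : ℝ^{2N} → ℝ^d, A ∈ ℝ^{2N×2k}, and let ℙ_0, ℙ_1, …, ℙ_ν ∈ ℝ^{d×d} be arbitrary matrices (the local DEIM projections). Define H(y) := ½ yᵀLy + yᵀf + 𝒢 + cᵀG(y) and, for i = 0,…,ν, the local hyper-reduced Hamiltonians H_hr^i(z) := ½ zᵀ(AᵀLA)z + zᵀ(Aᵀf) + 𝒢 + cᵀ ℙ_i G(Az). Let y^{(0)}, …, y^{(ν)} ∈ ℝ^{2N} and ẑ^{(0)}, …, ẑ^{(ν)} ∈ ℝ^{2k} be arbitrary sequences (approximations at the adaptation times) such that y^{(0)} = A Aᵀ y^{(0)}, ẑ^{(0)} = Aᵀ y^{(0)}, ℙ_0 G(A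 ẑ^{(0)}) = G(A ẑ^{(0)}), and ℙ_i G(A ẑ^{(i)}) = G(A ẑ^{(i)}) for i = 1, …, ν. Then for every j with 1 ≤ j ≤ ν, |H(y^{(j)}) − H(A ẑ^{(j)})| ≤ Σ_{i=0}^{j−1} ( |cᵀ(I − ℙ_i) G(A ẑ^{(i+1)})| + |H_hr^i(ẑ^{(i+1)}) − H_hr^i(ẑ^{(i)})| ) + |H(y^{(j)}) − H(y^{(0)})|. -/
open Matrix
open scoped RealInnerProductSpace

/-- Hamiltonian conservation error of the adaptive hyper-reduced model. -/
theorem stmt_16 (N k d : ℕ) (ν : ℕ)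
    (L : Matrix (Fin (2 * N)) (Fin (2 * N)) ℝ)
    (f : Fin (2 * N) → ℝ) (g : ℝ) (c : Fin d → ℝ)
    (G : (Fin (2 * N) → ℝ) → (Fin d → ℝ))
    (A : Matrix (Fin (2 * N)) (Fin (2 * k)) ℝ)
    (DP : ℕ → Matrix (Fin d) (Fin d) ℝ)
    (H : (Fin (2 * N) → ℝ) → ℝ)
    (hH : ∀ yv, H yv = (1 / 2) * (yv ⬝ᵥ (L *ᵥ yv)) + yv ⬝ᵥ f + g + c ⬝ᵥ G yv)
    (Hhr : ℕ → (Fin (2 * k) → ℝ) → ℝ)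
    (hHhr : ∀ i zv, Hhr i zv = (1 / 2) * (zv ⬝ᵥ ((Aᵀ * L * A) *ᵥ zv)) + zv ⬝ᵥ (Aᵀ *ᵥ f) + g
      + c ⬝ᵥ (DP i *ᵥ G (A *ᵥ zv)))
    (y : ℕ → (Fin (2 * N) → ℝ)) (zh : ℕ → (Fin (2 * k) → ℝ))
    (hy0 : y 0 = (A * Aᵀ) *ᵥ (y 0))
    (hz0 : zh 0 = Aᵀ *ᵥ (y 0))
    (hG0 : DP 0 *ᵥ G (A *ᵥ zh 0) = G (A *ᵥ zh 0))
    (hGi : ∀ i, 1 ≤ i → i ≤ ν → DP i *ᵥ G (A *ᵥ zh i) = G (A *ᵥ zh i)) :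
    ∀ j, 1 ≤ j → j ≤ ν →
      |H (y j) - H (A *ᵥ zh j)| ≤
        (∑ i ∈ Finset.range j,
          (|c ⬝ᵥ ((1 - DP i) *ᵥ G (A *ᵥ zh (i + 1)))| + |Hhr i (zh (i + 1)) - Hhr i (zh i)|))
        + |H (y j) - H (y 0)| := by

  intro j hj1 hjν
  have hdotA : ∀ (z : Fin (2 * k) → ℝ) (w : Fin (2 * N) → ℝ),
      z ⬝ᵥ (Aᵀ *ᵥ w) = (A *ᵥ z) ⬝ᵥ w := by
    intro z w
    rw [Matrix.dotProduct_mulVec, Matrix.vecMul_transpose]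
  have hquad : ∀ z : Fin (2 * k) → ℝ,
      z ⬝ᵥ ((Aᵀ * L * A) *ᵥ z) = (A *ᵥ z) ⬝ᵥ (L *ᵥ (A *ᵥ z)) := by
    intro z
    rw [Matrix.mul_assoc, ← Matrix.mulVec_mulVec, hdotA, ← Matrix.mulVec_mulVec]
  have hHrel : ∀ (i : ℕ) (z : Fin (2 * k) → ℝ),
      H (A *ᵥ z) - Hhr i z = c ⬝ᵥ ((1 - DP i) *ᵥ G (A *ᵥ z)) := by
    intro i z
    rw [hH, hHhr, hquad, hdotA, Matrix.sub_mulVec, Matrix.one_mulVec, dotProduct_sub]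
    ring
  have hHA : ∀ i, i ≤ ν → Hhr i (zh i) = H (A *ᵥ zh i) := by
    intro i hi
    have hproj : DP i *ᵥ G (A *ᵥ zh i) = G (A *ᵥ zh i) := by
      rcases Nat.eq_zero_or_pos i with h0 | h1
      · subst h0; exact hG0
      · exact hGi i h1 hi
    have := hHrel i (zh i)
    rw [Matrix.sub_mulVec, Matrix.one_mulVec, hproj, sub_self] at this
    simp only [dotProduct_zero] at this
    linarith
  have hy0z : A *ᵥ zh 0 = y 0 := by
    rw [hz0, Matrix.mulVec_mulVec, ← hy0]
  have bound : ∀ i ∈ Finset.range j,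
      |H (A *ᵥ zh (i + 1)) - H (A *ᵥ zh i)| ≤
        |c ⬝ᵥ ((1 - DP i) *ᵥ G (A *ᵥ zh (i + 1)))| + |Hhr i (zh (i + 1)) - Hhr i (zh i)| := by
    intro i hi
    have hiν : i ≤ ν := le_trans (Nat.le_of_lt (Finset.mem_range.mp hi)) hjν
    have h1 := hHA i hiν
    have h2 := hHrel i (zh (i + 1))
    have heq : H (A *ᵥ zh (i + 1)) - H (A *ᵥ zh i) =
        (c ⬝ᵥ ((1 - DP i) *ᵥ G (A *ᵥ zh (i + 1)))) + (Hhr i (zh (i + 1)) - Hhr i (zh i)) := by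
      rw [← h1]; linarith
    rw [heq]
    exact abs_add_le _ _
  have tele : H (A *ᵥ zh j) - H (A *ᵥ zh 0) =
      ∑ i ∈ Finset.range j, (H (A *ᵥ zh (i + 1)) - H (A *ᵥ zh i)) :=
    (Finset.sum_range_sub (fun i => H (A *ᵥ zh i)) j).symm
  have hsum : |H (A *ᵥ zh j) - H (A *ᵥ zh 0)| ≤
      ∑ i ∈ Finset.range j,
        (|c ⬝ᵥ ((1 - DP i) *ᵥ G (A *ᵥ zh (i + 1)))| + |Hhr i (zh (i + 1)) - Hhr i (zh i)|) := by
    rw [tele]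
    exact le_trans (Finset.abs_sum_le_sum_abs _ _) (Finset.sum_le_sum bound)
  have htri : |H (y j) - H (A *ᵥ zh j)| ≤
      |H (y j) - H (y 0)| + |H (y 0) - H (A *ᵥ zh j)| := abs_sub_le _ _ _
  rw [← hy0z] at htri
  rw [hy0z] at htri hsum
  have hcomm : |H (y 0) - H (A *ᵥ zh j)| = |H (A *ᵥ zh j) - H (y 0)| := abs_sub_comm _ _
  linarith
end
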